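/- arXiv:2311.01750 — 5 statements merged into one kernel-verified Lean document; each statement's English description precedes it below -/
import Mathlib

section
/- Let t ≥ 4 be an integer. For each n, let H₀ = H₀(n) be the complete tripartite 3-graph with vertex set [n] partitioned into parts V₁, V₂, V₃ with |V₁| ≤ |V₂| ≤ |V₃| ≤ |V₁| + 1 (so H₀ is dense, with e(H₀) ≥ d·n³ for some constant d > 0 and all large n). If p := p(n) satisfies p(n)·n^{1/m(⌈t/3⌉)} → 0 as n → ∞, then Pr[ K̃_t ⊆ H₀ ∪ ℍ(n,p) ] → 0 as n → ∞. -/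
open Finset Filter

attribute [local instance] Classical.propDecidable

/-- A hypergraph: a finite vertex set and a finite edge set (edges are finite
vertex sets; for 3-graphs all edges have three elements). -/
structure H3 where
  verts : Finset ℕ
  edges : Finset (Finset ℕ)

/-- The subhypergraph relation. -/
def H3.Sub (F H : H3) : Prop :=
  F.verts ⊆ H.verts ∧ F.edges ⊆ H.edges ∧ ∀ e ∈ F.edges, e ⊆ F.verts

/-- The density `d₃` of a 3-graph. -/
noncomputable def d3 (F : H3) : ℝ :=
  if F.edges.card = 0 then 0
  else if F.edges.card = 1 ∧ F.verts.card = 3 then 1 / 3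
  else ((F.edges.card : ℝ) - 1) / ((F.verts.card : ℝ) - 3)

/-- The maximal 3-density `m₃`. -/
noncomputable def m3 (H : H3) : ℝ :=
  sSup {x : ℝ | ∃ F : H3, F.Sub H ∧ x = d3 F}

/-- The asymmetric maximal 3-density `m₃(H₁,H₂)`. -/
noncomputable def m3Asym (H1 H2 : H3) : ℝ :=
  sSup {x : ℝ | ∃ F : H3, F.Sub H1 ∧ 1 ≤ F.edges.card ∧
    x = (F.edges.card : ℝ) / ((F.verts.card : ℝ) - 3 + 1 / m3 H2)}

/-- The maximum subhypergraph density `m(H)`. -/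
noncomputable def mDen (H : H3) : ℝ :=
  sSup {x : ℝ | ∃ F : H3, F.Sub H ∧ 1 ≤ F.verts.card ∧
    x = (F.edges.card : ℝ) / (F.verts.card : ℝ)}

/-- The canonical linear 3-clique `K̃_t`: branch vertices `0,…,t-1`; the pair
`(i,j)` with `i<j<t` gets the apex vertex `t + (C(j,2) + i)`, and the map
`(i,j) ↦ C(j,2) + i` is a bijection onto `[0, C(t,2))`. -/
noncomputable def linClique (t : ℕ) : H3 where
  verts := Finset.range (t + t.choose 2)
  edges := ((Finset.range t ×ˢ Finset.range t).filter fun p => p.1 < p.2).image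
    fun p => {p.1, p.2, t + (p.2.choose 2 + p.1)}

/-- `v(K̃_t)`. -/
def vOf (t : ℕ) : ℕ := t + t.choose 2

/-- `(cV, cE)` is a copy of the hypergraph `F` (an isomorphic image of `F`). -/
def IsCopy3 (F : H3) (cV : Finset ℕ) (cE : Finset (Finset ℕ)) : Prop :=
  ∃ φ : ℕ → ℕ, Set.InjOn φ ↑F.verts ∧ cV = F.verts.image φ ∧
    cE = F.edges.image fun e => e.image φ

/-- The edge set `E` contains a copy of the hypergraph `F`. -/
def ContainsCopy (F : H3) (E : Finset (Finset ℕ)) : Prop :=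
  ∃ cV cE, IsCopy3 F cV cE ∧ cE ⊆ E

/-- The edge set `E` induced on `U` contains a copy of the hypergraph `F`. -/
def ContainsCopyWithin (F : H3) (E : Finset (Finset ℕ)) (U : Finset ℕ) : Prop :=
  ∃ cV cE, IsCopy3 F cV cE ∧ cV ⊆ U ∧ cE ⊆ E

/-- The probability that the binomial random 3-graph `ℍ(n,p)` satisfies `P`. -/
noncomputable def PrH (n : ℕ) (p : ℝ) (P : Finset (Finset ℕ) → Prop) : ℝ :=
  ∑ R ∈ ((Finset.range n).powersetCard 3).powerset,
    if P R then p ^ R.card * (1 - p) ^ (((Finset.range n).powersetCard 3).card - R.card)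
    else 0

/-- `E → (F)₂` : every 2-colouring of `E` yields a monochromatic copy of `F`. -/
def Arrow2 (E : Finset (Finset ℕ)) (F : H3) : Prop :=
  ∀ χ : Finset ℕ → Bool, ∃ c : Bool, ContainsCopy F (E.filter fun e => χ e = c)

/-- `E → (F, F')` : every red/blue colouring of `E` yields a red copy of `F`
or a blue copy of `F'`. -/
def ArrowAsym (E : Finset (Finset ℕ)) (F F' : H3) : Prop :=
  ∀ χ : Finset ℕ → Bool,
    ContainsCopy F (E.filter fun e => χ e = true) ∨
    ContainsCopy F' (E.filter fun e => χ e = false)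

/-- `H` is `(F,F')`-Ramsey with respect to `(𝓕,𝓕')`. -/
def RamseyWrt (E : Finset (Finset ℕ)) (F F' : H3) (𝓕 𝓕' : Finset (Finset ℕ)) : Prop :=
  ∀ χ : Finset ℕ → Bool,
    (∃ cV cE, IsCopy3 F cV cE ∧ cE ⊆ E.filter (fun e => χ e = true) ∧ cV ∉ 𝓕) ∨
    (∃ cV cE, IsCopy3 F' cV cE ∧ cE ⊆ E.filter (fun e => χ e = false) ∧ cV ∉ 𝓕')

/-- The complete bipartite graph between `X` and `Y`, as a set of pairs. -/
noncomputable def K2 (X Y : Finset ℕ) : Finset (Finset ℕ) :=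
  (X ×ˢ Y).image fun p => ({p.1, p.2} : Finset ℕ)

/-- `e_G(X,Y)` : the number of edges of `G` with one endpoint in `X` and one in `Y`. -/
noncomputable def e2 (G : Finset (Finset ℕ)) (X Y : Finset ℕ) : ℕ :=
  (G.filter fun e => ∃ x ∈ X, ∃ y ∈ Y, e = {x, y}).card

/-- The graph `G` is `(δ,d)`-regular between `X` and `Y`. -/
def BipRegular (δ d : ℝ) (G : Finset (Finset ℕ)) (X Y : Finset ℕ) : Prop :=
  ∀ X' ⊆ X, ∀ Y' ⊆ Y,
    |(e2 G X' Y' : ℝ) - d * X'.card * Y'.card| ≤ δ * X.card * Y.card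

/-- `e_H(X,Y,Z)` : the number of edges of the 3-graph `E` meeting `X`, `Y` and `Z`. -/
noncomputable def e3 (E : Finset (Finset ℕ)) (X Y Z : Finset ℕ) : ℕ :=
  (E.filter fun e => ∃ x ∈ X, ∃ y ∈ Y, ∃ z ∈ Z, e = {x, y, z}).card

/-- The 3-graph `E` is `(δ,d)`-weakly-regular on `(X,Y,Z)`. -/
def WeakRegularWith (δ d : ℝ) (E : Finset (Finset ℕ)) (X Y Z : Finset ℕ) : Prop :=
  ∀ X' ⊆ X, ∀ Y' ⊆ Y, ∀ Z' ⊆ Z,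
    |(e3 E X' Y' Z' : ℝ) - d * X'.card * Y'.card * Z'.card| ≤
      δ * X.card * Y.card * Z.card

/-- The 3-graph `E` is `δ`-weakly-regular on `(X,Y,Z)`. -/
def WeakRegular (δ : ℝ) (E : Finset (Finset ℕ)) (X Y Z : Finset ℕ) : Prop :=
  WeakRegularWith δ ((e3 E X Y Z : ℝ) / (X.card * Y.card * Z.card)) E X Y Z

/-- The 3-graph `E` is `δ`-weakly-regular with respect to the vertex partition `V`. -/
def WeakRegWrt (δ : ℝ) (E : Finset (Finset ℕ)) {t : ℕ} (V : Fin t → Finset ℕ) : Prop :=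
  let bad : Finset (Fin t × Fin t × Fin t) :=
    Finset.univ.filter fun x =>
      x.1 < x.2.1 ∧ x.2.1 < x.2.2 ∧ ¬ WeakRegular δ E (V x.1) (V x.2.1) (V x.2.2)
  (bad.card : ℝ) ≤ δ * (t.choose 3)

/-- `K_3(G)` on parts `(X,Y,Z)` : the triangles of `G` with one vertex in each part,
as a set of vertex triples. -/
noncomputable def triSets (G : Finset (Finset ℕ)) (X Y Z : Finset ℕ) : Finset (Finset ℕ) :=
  ((X ×ˢ Y ×ˢ Z).filter fun p =>
      ({p.1, p.2.1} : Finset ℕ) ∈ G ∧ ({p.1, p.2.2} : Finset ℕ) ∈ G ∧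
        ({p.2.1, p.2.2} : Finset ℕ) ∈ G).image fun p => ({p.1, p.2.1, p.2.2} : Finset ℕ)

/-- The relative density `d(E|P)` of a 3-graph `E` with respect to the tripartite
graph `P` on parts `(X,Y,Z)`. -/
noncomputable def relDen (E P : Finset (Finset ℕ)) (X Y Z : Finset ℕ) : ℝ :=
  ((E ∩ triSets P X Y Z).card : ℝ) / ((triSets P X Y Z).card : ℝ)

/-- The 3-graph `E` is `(δ,d,r)`-regular with respect to the tripartite graph `P`
on parts `(X,Y,Z)`. -/
def StrongRegular (δ d : ℝ) (r : ℕ) (E P : Finset (Finset ℕ)) (X Y Z : Finset ℕ) : Prop :=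
  ∀ Q : Fin r → Finset (Finset ℕ), (∀ i, Q i ⊆ P) →
    δ * ((triSets P X Y Z).card : ℝ)
        ≤ (((Finset.univ : Finset (Fin r)).biUnion fun i => triSets (Q i) X Y Z).card : ℝ) →
    0 < δ * ((triSets P X Y Z).card : ℝ) →
    |((E ∩ ((Finset.univ : Finset (Fin r)).biUnion fun i => triSets (Q i) X Y Z)).card : ℝ)
        - d * (((Finset.univ : Finset (Fin r)).biUnion fun i => triSets (Q i) X Y Z).card : ℝ)|
      ≤ δ * ((triSets P X Y Z).card : ℝ)

/-- The triad `B^{ijk}_{αβγ}` of a family of bipartite graphs. -/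
def triadG {t ℓ : ℕ} (B : Fin t → Fin t → Fin ℓ → Finset (Finset ℕ))
    (i j k : Fin t) (α β γ : Fin ℓ) : Finset (Finset ℕ) :=
  B i j α ∪ B i k β ∪ B j k γ

/-- The 3-graph `E` is `(δ,r)`-regular with respect to the partition `B` of the
pairs crossing the vertex partition `V` of `[n]`. -/
def StrongRegWrtB (δ : ℝ) (r : ℕ) (E : Finset (Finset ℕ)) {t ℓ : ℕ}
    (V : Fin t → Finset ℕ) (B : Fin t → Fin t → Fin ℓ → Finset (Finset ℕ)) (n : ℕ) : Prop :=
  let bad : Finset ((Fin t × Fin t × Fin t) × Fin ℓ × Fin ℓ × Fin ℓ) :=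
    Finset.univ.filter fun x =>
      x.1.1 < x.1.2.1 ∧ x.1.2.1 < x.1.2.2 ∧
        ¬ StrongRegular δ
          (relDen E (triadG B x.1.1 x.1.2.1 x.1.2.2 x.2.1 x.2.2.1 x.2.2.2)
            (V x.1.1) (V x.1.2.1) (V x.1.2.2))
          r E (triadG B x.1.1 x.1.2.1 x.1.2.2 x.2.1 x.2.2.1 x.2.2.2)
          (V x.1.1) (V x.1.2.1) (V x.1.2.2)
  ((bad.biUnion fun x =>
      triSets (triadG B x.1.1 x.1.2.1 x.1.2.2 x.2.1 x.2.2.1 x.2.2.2)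
        (V x.1.1) (V x.1.2.1) (V x.1.2.2)).card : ℝ) ≤ δ * (n : ℝ) ^ 3

/-- The joint link graph `⋂_{j} L_H(x_j, P)` of a tuple `x`, supported on the
bipartite part of `P` between `Y` and `Z`. -/
noncomputable def jointLink (EH P : Finset (Finset ℕ)) (Y Z : Finset ℕ) {t : ℕ}
    (x : Fin t → ℕ) : Finset (Finset ℕ) :=
  P.filter fun e => (∃ y ∈ Y, ∃ z ∈ Z, e = {y, z}) ∧ ∀ j : Fin t, insert (x j) e ∈ EH

/-- The joint link graph `L_H(X) = ⋂_{x ∈ X} L_H(x)` of a set `X` of vertices of a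
3-graph on `[n]`. -/
noncomputable def jointLinkSet (n : ℕ) (E : Finset (Finset ℕ)) (X : Finset ℕ) :
    Finset (Finset ℕ) :=
  ((Finset.range n).powersetCard 2).filter fun q => ∀ x ∈ X, insert x q ∈ E

/-- The complete tripartite 3-graph on parts `V1`, `V2`, `V3`. -/
noncomputable def tripartiteEdges (V1 V2 V3 : Finset ℕ) : Finset (Finset ℕ) :=
  (V1 ×ˢ V2 ×ˢ V3).image fun p => ({p.1, p.2.1, p.2.2} : Finset ℕ)

/-- The minimum 1-degree `δ₁` of a 3-graph on `[n]`. -/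
noncomputable def minDeg1 (n : ℕ) (E : Finset (Finset ℕ)) : ℕ :=
  if h : ((Finset.range n).image fun v => (E.filter fun e => v ∈ e).card).Nonempty then
    ((Finset.range n).image fun v => (E.filter fun e => v ∈ e).card).min' h
  else 0

/-- `(cV, cE)` is a copy of the graph `(KV, KE)` (an isomorphic image). -/
def IsCopy2 (KV : Finset ℕ) (KE : Finset (Finset ℕ))
    (cV : Finset ℕ) (cE : Finset (Finset ℕ)) : Prop :=
  ∃ φ : ℕ → ℕ, Set.InjOn φ ↑KV ∧ cV = KV.image φ ∧ cE = KE.image fun e => e.image φ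


lemma choose2_succ (j : ℕ) : (j+1).choose 2 = j.choose 2 + j := by
  have : (j+1).choose 2 = j.choose 1 + j.choose 2 := Nat.choose_succ_succ j 1
  simp [Nat.choose_one_right] at this
  omega

lemma enc_lt {i j s : ℕ} (hij : i < j) (hjs : j < s) : j.choose 2 + i < s.choose 2 := by
  have h1 : j.choose 2 + i < (j+1).choose 2 := by rw [choose2_succ]; omega
  exact lt_of_lt_of_le h1 (Nat.choose_le_choose 2 hjs)

lemma enc_inj {i j i' j' : ℕ} (hij : i < j) (hij' : i' < j')
    (h : j.choose 2 + i = j'.choose 2 + i') : i = i' ∧ j = j' := by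
  have key : ∀ a b a' b' : ℕ, a < b → a' < b' → b.choose 2 + a = b'.choose 2 + a' → b ≤ b' := by
    intro a b a' b' hab hab' hh
    by_contra hbb
    push_neg at hbb
    have := enc_lt hab' hbb
    omega
  have h1 := key _ _ _ _ hij hij' h
  have h2 := key _ _ _ _ hij' hij h.symm
  have hjj : j = j' := le_antisymm h1 h2
  subst hjj; omega

def dec2 (k : ℕ) : ℕ := Nat.findGreatest (fun j => j.choose 2 ≤ k) (k+2)
def dec1 (k : ℕ) : ℕ := k - (dec2 k).choose 2

lemma choose2_le_imp (j k : ℕ) (h : j.choose 2 ≤ k) : j ≤ k + 2 := by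
  rcases Nat.lt_or_ge j 3 with h3 | h3
  · omega
  · have hj : j - 1 ≤ j.choose 2 := by
      rw [Nat.choose_two_right]
      have h2 : (j-1)*2 ≤ j * (j-1) := by nlinarith [Nat.sub_le j 1]
      omega
    omega

lemma dec2_spec (k : ℕ) : (dec2 k).choose 2 ≤ k :=
  Nat.findGreatest_spec (P := fun j => j.choose 2 ≤ k) (m := 0) (by omega) (by simp)

lemma dec2_enc {i j : ℕ} (hij : i < j) : dec2 (j.choose 2 + i) = j := by
  have hj : j ≤ j.choose 2 + i + 2 := choose2_le_imp j _ (Nat.le_add_right _ _)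
  have hle : j ≤ dec2 (j.choose 2 + i) :=
    Nat.le_findGreatest (P := fun j' => j'.choose 2 ≤ j.choose 2 + i) hj (Nat.le_add_right _ _)
  have hge : dec2 (j.choose 2 + i) ≤ j := by
    by_contra hh
    push_neg at hh
    have hspec := dec2_spec (j.choose 2 + i)
    have := enc_lt (i := 0) (Nat.zero_lt_of_lt hij) hh
    simp [choose2_succ] at this
    have hmono := Nat.choose_le_choose 2 (Nat.succ_le_of_lt hh)
    rw [choose2_succ] at hmono
    omega
  omega

lemma dec1_enc {i j : ℕ} (hij : i < j) : dec1 (j.choose 2 + i) = i := by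
  rw [dec1, dec2_enc hij]; omega

/-- decode is a correct inverse on `[0, C(s,2))`. -/
lemma dec_lt {k s : ℕ} (hk : k < s.choose 2) :
    dec1 k < dec2 k ∧ dec2 k < s ∧ (dec2 k).choose 2 + dec1 k = k := by
  have hspec := dec2_spec k
  have hlt : dec1 k < dec2 k := by
    by_contra hh
    push_neg at hh
    -- then k ≥ C(dec2 k,2) + dec2 k = C(dec2 k + 1, 2), so findGreatest ≥ dec2 k + 1
    have hP : (dec2 k + 1).choose 2 ≤ k := by rw [choose2_succ]; unfold dec1 at hh; omega
    have hb : dec2 k + 1 ≤ k + 2 := by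
      have := choose2_le_imp (dec2 k + 1) k hP; omega
    have h2 : dec2 k + 1 ≤ dec2 k :=
      Nat.le_findGreatest (P := fun j => j.choose 2 ≤ k) hb hP
    omega
  refine ⟨hlt, ?_, by unfold dec1; omega⟩
  by_contra hh
  push_neg at hh
  have := Nat.choose_le_choose 2 hh
  omega

section LinCliqueFacts
open Finset

lemma mem_linClique_edges {s : ℕ} {e : Finset ℕ} :
    e ∈ (linClique s).edges ↔ ∃ i j, i < j ∧ j < s ∧ e = {i, j, s + (j.choose 2 + i)} := by
  constructor
  · intro he
    rw [linClique, Finset.mem_image] at he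
    obtain ⟨p, hp, rfl⟩ := he
    rw [Finset.mem_filter, Finset.mem_product] at hp
    exact ⟨p.1, p.2, hp.2, Finset.mem_range.1 hp.1.2, rfl⟩
  · rintro ⟨i, j, hij, hjs, rfl⟩
    rw [linClique, Finset.mem_image]
    refine ⟨(i, j), ?_, rfl⟩
    rw [Finset.mem_filter, Finset.mem_product]
    exact ⟨⟨Finset.mem_range.2 (hij.trans hjs), Finset.mem_range.2 hjs⟩, hij⟩

lemma linClique_triple_eq {s i j i' j' : ℕ} (hij : i < j) (hjs : j < s)
    (hij' : i' < j') (hjs' : j' < s)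
    (h : ({i, j, s + (j.choose 2 + i)} : Finset ℕ) = {i', j', s + (j'.choose 2 + i')}) :
    i = i' ∧ j = j' := by
  have hmem : ∀ x : ℕ, x ∈ ({i, j, s + (j.choose 2 + i)} : Finset ℕ) ↔
      x ∈ ({i', j', s + (j'.choose 2 + i')} : Finset ℕ) := fun x => by rw [h]
  have h1 := (hmem i).1 (by simp)
  have h2 := (hmem j).1 (by simp)
  have h3 := (hmem i').2 (by simp)
  have h4 := (hmem j').2 (by simp)
  simp only [Finset.mem_insert, Finset.mem_singleton] at h1 h2 h3 h4
  omega

lemma linClique_edge_subset {s : ℕ} {e : Finset ℕ} (he : e ∈ (linClique s).edges) :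
    e ⊆ (linClique s).verts := by
  obtain ⟨i, j, hij, hjs, rfl⟩ := mem_linClique_edges.1 he
  have := enc_lt hij hjs
  intro x hx
  simp only [Finset.mem_insert, Finset.mem_singleton] at hx
  rw [linClique]
  simp only [Finset.mem_range]
  omega

lemma linClique_edges_card (s : ℕ) : (linClique s).edges.card = s.choose 2 := by
  rw [linClique]
  rw [Finset.card_image_of_injOn]
  · rw [Finset.card_nbij (fun p => ({p.1, p.2} : Finset ℕ))]
    · exact (Finset.card_powersetCard 2 (Finset.range s)).trans (by rw [Finset.card_range])
    · intro p hp
      rw [Finset.mem_coe, Finset.mem_filter, Finset.mem_product] at hp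
      rw [Finset.mem_coe, Finset.mem_powersetCard]
      constructor
      · intro x hx
        simp only [Finset.mem_insert, Finset.mem_singleton] at hx
        rcases hx with rfl | rfl
        · exact hp.1.1
        · exact hp.1.2
      · rw [Finset.card_insert_of_notMem (by simp [Nat.ne_of_lt hp.2]), Finset.card_singleton]
    · intro p hp q hq hpq
      rw [Finset.mem_coe, Finset.mem_filter, Finset.mem_product] at hp hq
      have hpq' : ({p.1, p.2} : Finset ℕ) = {q.1, q.2} := hpq
      have h1 : p.1 ∈ ({q.1, q.2} : Finset ℕ) := by rw [← hpq']; simp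
      have h2 : p.2 ∈ ({q.1, q.2} : Finset ℕ) := by rw [← hpq']; simp
      have h3 : q.1 ∈ ({p.1, p.2} : Finset ℕ) := by rw [hpq']; simp
      simp only [Finset.mem_insert, Finset.mem_singleton] at h1 h2 h3
      have := hp.2; have := hq.2
      have : p.1 = q.1 ∧ p.2 = q.2 := by omega
      exact Prod.ext this.1 this.2
    · intro e he
      rw [Finset.mem_coe, Finset.mem_powersetCard] at he
      obtain ⟨a, b, hab, rfl⟩ := Finset.card_eq_two.1 he.2
      rcases Nat.lt_or_ge a b with hlt | hge
      · refine ⟨(a, b), ?_, rfl⟩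
        rw [Finset.mem_coe, Finset.mem_filter, Finset.mem_product]
        exact ⟨⟨he.1 (by simp), he.1 (by simp)⟩, hlt⟩
      · refine ⟨(b, a), ?_, ?_⟩
        · rw [Finset.mem_coe, Finset.mem_filter, Finset.mem_product]
          exact ⟨⟨he.1 (by simp), he.1 (by simp)⟩, by omega⟩
        · exact Finset.pair_comm b a
  · intro p hp q hq hpq
    rw [Finset.mem_coe, Finset.mem_filter, Finset.mem_product] at hp hq
    have := linClique_triple_eq hp.2 (Finset.mem_range.1 hp.1.2) hq.2
      (Finset.mem_range.1 hq.1.2) hpq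
    exact Prod.ext this.1 this.2

end LinCliqueFacts


section MDenFacts
open Finset

lemma two_mul_choose_two (b : ℕ) : 2 * b.choose 2 = b * (b - 1) := by
  induction b with
  | zero => simp
  | succ c ih =>
    rw [choose2_succ, Nat.succ_sub_one, Nat.mul_add, ih]
    cases c with
    | zero => simp
    | succ d => rw [Nat.succ_sub_one]; ring

lemma triple_max {i j s : ℕ} (hij : i < j) (hjs : j < s) :
    ∀ h : ({i, j, s + (j.choose 2 + i)} : Finset ℕ).Nonempty,
      ({i, j, s + (j.choose 2 + i)} : Finset ℕ).max' h = s + (j.choose 2 + i) := by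
  intro h
  apply le_antisymm
  · apply Finset.max'_le
    intro y hy
    simp only [Finset.mem_insert, Finset.mem_singleton] at hy
    omega
  · exact Finset.le_max' _ _ (by simp)

lemma mDen_set_mem_le {s : ℕ} (hs : 2 ≤ s) {x : ℝ}
    (hx : ∃ F : H3, F.Sub (linClique s) ∧ 1 ≤ F.verts.card ∧
      x = (F.edges.card : ℝ) / (F.verts.card : ℝ)) :
    x ≤ ((s : ℝ) - 1) / ((s : ℝ) + 1) := by
  obtain ⟨F, hFsub, hFv, rfl⟩ := hx
  set b := (F.verts ∩ Finset.range s).card with hb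
  have hne : ∀ e ∈ F.edges, e.Nonempty := by
    intro e he
    obtain ⟨i, j, hij, hjs, rfl⟩ := mem_linClique_edges.1 (hFsub.2.1 he)
    exact ⟨i, by simp⟩
  -- each edge has its own apex in F.verts \ range s
  have hapex : F.edges.card ≤ (F.verts \ Finset.range s).card := by
    apply Finset.card_le_card_of_injOn
      (fun e => if h : e.Nonempty then e.max' h else 0)
    · intro e he
      obtain ⟨i, j, hij, hjs, hee⟩ := mem_linClique_edges.1 (hFsub.2.1 he)
      have hnee := hne e he
      rw [Finset.mem_coe]; beta_reduce
      rw [dif_pos hnee]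
      subst hee
      rw [triple_max hij hjs hnee]
      rw [Finset.mem_sdiff, Finset.mem_range]
      exact ⟨hFsub.2.2 _ he (by simp), by omega⟩
    · intro e he f hf hef
      simp only [Finset.mem_coe] at he hf
      obtain ⟨i, j, hij, hjs, hee⟩ := mem_linClique_edges.1 (hFsub.2.1 he)
      obtain ⟨i', j', hij', hjs', hff⟩ := mem_linClique_edges.1 (hFsub.2.1 hf)
      have hef2 : (if h : e.Nonempty then e.max' h else 0)
          = (if h : f.Nonempty then f.max' h else 0) := hef
      rw [dif_pos (hne e he), dif_pos (hne f hf)] at hef2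
      have h1 : e.max' (hne e he) = s + (j.choose 2 + i) := by
        subst hee; exact triple_max hij hjs _
      have h2 : f.max' (hne f hf) = s + (j'.choose 2 + i') := by
        subst hff; exact triple_max hij' hjs' _
      rw [h1, h2] at hef2
      have henc : j.choose 2 + i = j'.choose 2 + i' := by omega
      obtain ⟨rfl, rfl⟩ := enc_inj hij hij' henc
      rw [hee, hff]
  -- each edge gives a 2-subset of the branch vertices of F
  have hpairs : F.edges.card ≤ b.choose 2 := by
    have key := Finset.card_le_card_of_injOn (f := fun (e : Finset ℕ) => e ∩ Finset.range s)
      (s := F.edges) (t := Finset.powersetCard 2 (F.verts ∩ Finset.range s)) ?_ ?_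
    · rwa [Finset.card_powersetCard] at key
    · intro e he
      obtain ⟨i, j, hij, hjs, rfl⟩ := mem_linClique_edges.1 (hFsub.2.1 he)
      have hsub := hFsub.2.2 _ he
      rw [Finset.mem_coe, Finset.mem_powersetCard]
      beta_reduce
      have hinter : ({i, j, s + (j.choose 2 + i)} : Finset ℕ) ∩ Finset.range s
          = {i, j} := by
        ext x
        simp only [Finset.mem_inter, Finset.mem_insert, Finset.mem_singleton,
          Finset.mem_range]
        omega
      rw [hinter]
      constructor
      · intro x hx
        simp only [Finset.mem_insert, Finset.mem_singleton] at hx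
        rw [Finset.mem_inter, Finset.mem_range]
        rcases hx with rfl | rfl
        · exact ⟨hsub (by simp), hij.trans hjs⟩
        · exact ⟨hsub (by simp), hjs⟩
      · rw [Finset.card_insert_of_notMem (by simp [Nat.ne_of_lt hij]),
          Finset.card_singleton]
    · intro e he f hf hef
      simp only [Finset.mem_coe] at he hf
      obtain ⟨i, j, hij, hjs, hee⟩ := mem_linClique_edges.1 (hFsub.2.1 he)
      obtain ⟨i', j', hij', hjs', hff⟩ := mem_linClique_edges.1 (hFsub.2.1 hf)
      have hinter : ∀ a c : ℕ, a < c → c < s →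
          ({a, c, s + (c.choose 2 + a)} : Finset ℕ) ∩ Finset.range s = {a, c} := by
        intro a c hac hcs
        ext x
        simp only [Finset.mem_inter, Finset.mem_insert, Finset.mem_singleton,
          Finset.mem_range]
        omega
      have h2 : ({i, j} : Finset ℕ) = {i', j'} := by
        have e1 := hinter i j hij hjs
        have e2 := hinter i' j' hij' hjs'
        have heq : e ∩ Finset.range s = f ∩ Finset.range s := hef
        rw [hee, hff, e1, e2] at heq
        exact heq
      have hii : i = i' ∧ j = j' := by
        have m1 : i ∈ ({i', j'} : Finset ℕ) := by rw [← h2]; simp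
        have m2 : j ∈ ({i', j'} : Finset ℕ) := by rw [← h2]; simp
        have m3 : i' ∈ ({i, j} : Finset ℕ) := by rw [h2]; simp
        simp only [Finset.mem_insert, Finset.mem_singleton] at m1 m2 m3
        omega
      rw [hee, hff, hii.1, hii.2]
  have hble : b ≤ s := le_trans (Finset.card_le_card Finset.inter_subset_right)
    (le_of_eq (Finset.card_range s))
  have hcard : b + (F.verts \ Finset.range s).card = F.verts.card :=
    Finset.card_inter_add_card_sdiff F.verts (Finset.range s)
  -- now the arithmetic
  have h2e : 2 * F.edges.card ≤ b * (b - 1) := by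
    rw [← two_mul_choose_two]; omega
  have hbe : b + F.edges.card ≤ F.verts.card := by omega
  rcases Nat.eq_zero_or_pos b with hb0 | hbpos
  · have : F.edges.card = 0 := by
      rw [hb0] at hpairs; simpa using hpairs
    rw [this]
    simp only [Nat.cast_zero, zero_div]
    have c6 : (2:ℝ) ≤ (s:ℝ) := by exact_mod_cast hs
    apply div_nonneg <;> linarith
  · have hvpos : (0 : ℝ) < (F.verts.card : ℝ) := by
      exact_mod_cast Nat.pos_of_ne_zero (by omega)
    rw [div_le_div_iff₀ hvpos (by push_cast; linarith [(by exact_mod_cast hs : (2:ℝ) ≤ (s:ℝ))])]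
    have c1 : (2 : ℝ) * F.edges.card ≤ (b : ℝ) * ((b : ℝ) - 1) := by
      have : ((b : ℝ) - 1) = ((b - 1 : ℕ) : ℝ) := by
        rw [Nat.cast_sub hbpos]; simp
      rw [this]
      exact_mod_cast h2e
    have c2 : (b : ℝ) + F.edges.card ≤ (F.verts.card : ℝ) := by exact_mod_cast hbe
    have c3 : (b : ℝ) ≤ (s : ℝ) := by exact_mod_cast hble
    have c4 : (0 : ℝ) ≤ (F.edges.card : ℝ) := Nat.cast_nonneg _
    have c5 : (1 : ℝ) ≤ (b : ℝ) := by exact_mod_cast hbpos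
    have c6 : (2 : ℝ) ≤ (s : ℝ) := by exact_mod_cast hs
    nlinarith [mul_nonneg (sub_nonneg.2 c3) (sub_nonneg.2 c5)]

lemma linClique_verts_card (s : ℕ) : (linClique s).verts.card = s + s.choose 2 := by
  rw [linClique, Finset.card_range]

lemma mDen_linClique {s : ℕ} (hs : 2 ≤ s) :
    mDen (linClique s) = ((s : ℝ) - 1) / ((s : ℝ) + 1) := by
  have hmem : (((s : ℝ) - 1) / ((s : ℝ) + 1)) ∈
      {x : ℝ | ∃ F : H3, F.Sub (linClique s) ∧ 1 ≤ F.verts.card ∧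
        x = (F.edges.card : ℝ) / (F.verts.card : ℝ)} := by
    refine ⟨linClique s, ⟨subset_rfl, subset_rfl, fun e he => linClique_edge_subset he⟩, ?_, ?_⟩
    · rw [linClique_verts_card]; omega
    · rw [linClique_verts_card, linClique_edges_card]
      have h2 : 2 * s.choose 2 = s * (s - 1) := two_mul_choose_two s
      have hcast : (2 : ℝ) * (s.choose 2 : ℝ) = (s : ℝ) * ((s : ℝ) - 1) := by
        have : ((s - 1 : ℕ) : ℝ) = (s : ℝ) - 1 := by
          rw [Nat.cast_sub (by omega)]; simp
        rw [← this]
        exact_mod_cast h2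
      have c6 : (2:ℝ) ≤ (s:ℝ) := by exact_mod_cast hs
      have hd1 : (0:ℝ) < (s : ℝ) + (s.choose 2 : ℝ) := by
        have := Nat.cast_nonneg (α := ℝ) (s.choose 2)
        linarith
      push_cast
      rw [eq_comm, div_eq_div_iff (ne_of_gt hd1) (by linarith : (s:ℝ) + 1 ≠ 0)]
      linear_combination hcast
  have hub : ∀ x ∈ {x : ℝ | ∃ F : H3, F.Sub (linClique s) ∧ 1 ≤ F.verts.card ∧
      x = (F.edges.card : ℝ) / (F.verts.card : ℝ)}, x ≤ ((s : ℝ) - 1) / ((s : ℝ) + 1) :=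
    fun x hx => mDen_set_mem_le hs hx
  exact le_antisymm (csSup_le ⟨_, hmem⟩ hub) (le_csSup ⟨_, hub⟩ hmem)

end MDenFacts


section ProbFacts
open Finset

lemma PrH_nonneg {n : ℕ} {p : ℝ} (hp0 : 0 ≤ p) (hp1 : p ≤ 1)
    (P : Finset (Finset ℕ) → Prop) : 0 ≤ PrH n p P := by
  apply Finset.sum_nonneg
  intro R hR
  split
  · exact mul_nonneg (pow_nonneg hp0 _) (pow_nonneg (by linarith) _)
  · exact le_refl 0

lemma sum_pow_total (A : Finset (Finset ℕ)) (p : ℝ) :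
    ∑ S ∈ A.powerset, p ^ S.card * (1 - p) ^ (A.card - S.card) = 1 := by
  have key := Finset.prod_add (fun _ : Finset ℕ => p) (fun _ : Finset ℕ => 1 - p) A
  simp only [Finset.prod_const] at key
  have h1 : p + (1 - p) = (1 : ℝ) := by ring
  rw [h1, one_pow] at key
  refine Eq.trans (Finset.sum_congr rfl ?_) key.symm
  intro S hS
  rw [Finset.mem_powerset] at hS
  rw [Finset.card_sdiff_of_subset hS]

lemma PrH_superset {n : ℕ} {p : ℝ} {c : Finset (Finset ℕ)}
    (hc : c ⊆ (Finset.range n).powersetCard 3) :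
    PrH n p (fun R => c ⊆ R) = p ^ c.card := by
  classical
  set ground := (Finset.range n).powersetCard 3 with hground
  have h1 : ∑ R ∈ ground.powerset,
        (if c ⊆ R then p ^ R.card * (1 - p) ^ (ground.card - R.card) else 0)
      = ∑ R ∈ ground.powerset.filter (fun R => c ⊆ R),
        (if c ⊆ R then p ^ R.card * (1 - p) ^ (ground.card - R.card) else 0) := by
    apply (Finset.sum_subset (Finset.filter_subset _ _) ?_).symm
    intro x hx hxn
    rw [Finset.mem_filter] at hxn
    rw [if_neg (fun hcx => hxn ⟨hx, hcx⟩)]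
  have h2 : ∑ R ∈ ground.powerset.filter (fun R => c ⊆ R),
        (if c ⊆ R then p ^ R.card * (1 - p) ^ (ground.card - R.card) else 0)
      = ∑ R ∈ ground.powerset.filter (fun R => c ⊆ R),
        p ^ R.card * (1 - p) ^ (ground.card - R.card) := by
    apply Finset.sum_congr rfl
    intro R hR
    rw [if_pos (Finset.mem_filter.1 hR).2]
  have hbij : ∑ R ∈ ground.powerset.filter (fun R => c ⊆ R),
      p ^ R.card * (1 - p) ^ (ground.card - R.card)
      = ∑ S ∈ (ground \ c).powerset,
        p ^ (S ∪ c).card * (1 - p) ^ (ground.card - (S ∪ c).card) := by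
    apply Finset.sum_nbij' (fun R => R \ c) (fun S => S ∪ c)
    · intro R hR
      rw [Finset.mem_filter, Finset.mem_powerset] at hR
      rw [Finset.mem_powerset]
      exact Finset.sdiff_subset_sdiff hR.1 (le_refl c)
    · intro S hS
      rw [Finset.mem_powerset] at hS
      rw [Finset.mem_filter, Finset.mem_powerset]
      constructor
      · exact Finset.union_subset (hS.trans (Finset.sdiff_subset)) hc
      · exact Finset.subset_union_right
    · intro R hR
      rw [Finset.mem_filter, Finset.mem_powerset] at hR
      exact Finset.sdiff_union_of_subset hR.2
    · intro S hS
      rw [Finset.mem_powerset] at hS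
      rw [Finset.union_sdiff_right]
      apply Finset.sdiff_eq_self_of_disjoint
      rw [Finset.disjoint_left]
      intro a haS hac
      exact (Finset.mem_sdiff.1 (hS haS)).2 hac
    · intro R hR
      rw [Finset.mem_filter, Finset.mem_powerset] at hR
      rw [Finset.sdiff_union_of_subset hR.2]
  have hdisj : ∀ S ∈ (ground \ c).powerset, (S ∪ c).card = S.card + c.card := by
    intro S hS
    rw [Finset.mem_powerset] at hS
    apply Finset.card_union_of_disjoint
    rw [Finset.disjoint_left]
    intro a haS hac
    exact (Finset.mem_sdiff.1 (hS haS)).2 hac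
  have hcc : c.card ≤ ground.card := Finset.card_le_card hc
  have hgc : (ground \ c).card = ground.card - c.card := Finset.card_sdiff_of_subset hc
  have hfinal : ∑ S ∈ (ground \ c).powerset,
        p ^ (S ∪ c).card * (1 - p) ^ (ground.card - (S ∪ c).card)
      = ∑ S ∈ (ground \ c).powerset,
        p ^ c.card * (p ^ S.card * (1 - p) ^ ((ground \ c).card - S.card)) := by
    apply Finset.sum_congr rfl
    intro S hS
    rw [hdisj S hS, pow_add]
    have hSle : S.card ≤ (ground \ c).card :=
      Finset.card_le_card (Finset.mem_powerset.1 hS)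
    have heg : ground.card - (S.card + c.card) = (ground \ c).card - S.card := by
      rw [hgc]; omega
    rw [heg]; ring
  have key : ∑ R ∈ ground.powerset,
      (if c ⊆ R then p ^ R.card * (1 - p) ^ (ground.card - R.card) else 0) = p ^ c.card := by
    rw [h1, h2, hbij, hfinal, ← Finset.mul_sum, sum_pow_total, mul_one]
  rw [PrH, ← hground]
  convert key using 2 with R
  congr!

lemma PrH_union_bound {n : ℕ} {p : ℝ} (hp0 : 0 ≤ p) (hp1 : p ≤ 1)
    {ι : Type*} (C : Finset ι) (Q : ι → Finset (Finset ℕ) → Prop)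
    (P : Finset (Finset ℕ) → Prop)
    (h : ∀ R, R ⊆ (Finset.range n).powersetCard 3 → P R → ∃ g ∈ C, Q g R) :
    PrH n p P ≤ ∑ g ∈ C, PrH n p (Q g) := by
  classical
  have swap : ∑ g ∈ C, PrH n p (Q g)
      = ∑ R ∈ ((Finset.range n).powersetCard 3).powerset, ∑ g ∈ C,
        (if Q g R then p ^ R.card * (1 - p) ^ (((Finset.range n).powersetCard 3).card - R.card)
         else 0) := by
    rw [Finset.sum_comm]
    rfl
  rw [swap, PrH]
  apply Finset.sum_le_sum
  intro R hR
  set w := p ^ R.card * (1 - p) ^ (((Finset.range n).powersetCard 3).card - R.card) with hw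
  have hw0 : 0 ≤ w := mul_nonneg (pow_nonneg hp0 _) (pow_nonneg (by linarith) _)
  split
  · rename_i hPR
    obtain ⟨g0, hg0, hQ⟩ := h R (Finset.mem_powerset.1 hR) hPR
    calc w = (if Q g0 R then w else 0) := by rw [if_pos hQ]
      _ ≤ ∑ g ∈ C, (if Q g R then w else 0) := by
          apply Finset.single_le_sum (fun g _ => ?_) hg0
          split
          · exact hw0
          · exact le_refl 0
  · exact Finset.sum_nonneg fun g _ => by
      split
      · exact hw0
      · exact le_refl 0

end ProbFacts


section CopyEdges
open Finset

noncomputable def copyEdges (s : ℕ) (g : ℕ → ℕ) : Finset (Finset ℕ) :=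
  ((Finset.range s ×ˢ Finset.range s).filter fun p => p.1 < p.2).image
    fun p => {g p.1, g p.2, g (s + (p.2.choose 2 + p.1))}

lemma pairs_card (s : ℕ) :
    ((Finset.range s ×ˢ Finset.range s).filter fun p => p.1 < p.2).card = s.choose 2 := by
  rw [Finset.card_nbij (fun p => ({p.1, p.2} : Finset ℕ))]
  · exact (Finset.card_powersetCard 2 (Finset.range s)).trans (by rw [Finset.card_range])
  · intro p hp
    rw [Finset.mem_coe, Finset.mem_filter, Finset.mem_product] at hp
    rw [Finset.mem_coe, Finset.mem_powersetCard]
    beta_reduce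
    constructor
    · intro x hx
      simp only [Finset.mem_insert, Finset.mem_singleton] at hx
      rcases hx with rfl | rfl
      · exact hp.1.1
      · exact hp.1.2
    · rw [Finset.card_insert_of_notMem (by simp [Nat.ne_of_lt hp.2]), Finset.card_singleton]
  · intro p hp q hq hpq
    rw [Finset.mem_coe, Finset.mem_filter, Finset.mem_product] at hp hq
    have hpq' : ({p.1, p.2} : Finset ℕ) = {q.1, q.2} := hpq
    have h1 : p.1 ∈ ({q.1, q.2} : Finset ℕ) := by rw [← hpq']; simp
    have h2 : p.2 ∈ ({q.1, q.2} : Finset ℕ) := by rw [← hpq']; simp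
    have h3 : q.1 ∈ ({p.1, p.2} : Finset ℕ) := by rw [hpq']; simp
    simp only [Finset.mem_insert, Finset.mem_singleton] at h1 h2 h3
    have := hp.2; have := hq.2
    have hpq2 : p.1 = q.1 ∧ p.2 = q.2 := by omega
    exact Prod.ext hpq2.1 hpq2.2
  · intro e he
    rw [Finset.mem_coe, Finset.mem_powersetCard] at he
    obtain ⟨a, b, hab, rfl⟩ := Finset.card_eq_two.1 he.2
    rcases Nat.lt_or_ge a b with hlt | hge
    · refine ⟨(a, b), ?_, rfl⟩
      rw [Finset.mem_coe, Finset.mem_filter, Finset.mem_product]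
      exact ⟨⟨he.1 (by simp), he.1 (by simp)⟩, hlt⟩
    · refine ⟨(b, a), ?_, ?_⟩
      · rw [Finset.mem_coe, Finset.mem_filter, Finset.mem_product]
        exact ⟨⟨he.1 (by simp), he.1 (by simp)⟩, by omega⟩
      · exact Finset.pair_comm b a

lemma triple_mem_iff {g : ℕ → ℕ} {D : Finset ℕ} (hg : ∀ a ∈ D, ∀ b ∈ D, g a = g b → a = b)
    {a b c : ℕ} (ha : a ∈ D) (hb : b ∈ D) (hc : c ∈ D) {x : ℕ} (hx : x ∈ D) :
    g x ∈ ({g a, g b, g c} : Finset ℕ) ↔ x ∈ ({a, b, c} : Finset ℕ) := by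
  simp only [Finset.mem_insert, Finset.mem_singleton]
  constructor
  · rintro (h | h | h)
    · exact Or.inl (hg x hx a ha h)
    · exact Or.inr (Or.inl (hg x hx b hb h))
    · exact Or.inr (Or.inr (hg x hx c hc h))
  · rintro (rfl | rfl | rfl) <;> simp

lemma copyEdges_card {s : ℕ} {g : ℕ → ℕ}
    (hg : ∀ a ∈ Finset.range (s + s.choose 2), ∀ b ∈ Finset.range (s + s.choose 2),
      g a = g b → a = b) :
    (copyEdges s g).card = s.choose 2 := by
  rw [copyEdges, Finset.card_image_of_injOn, pairs_card]
  intro p hp q hq hpq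
  rw [Finset.mem_coe, Finset.mem_filter, Finset.mem_product] at hp hq
  obtain ⟨⟨hp1, hp2⟩, hplt⟩ := hp
  obtain ⟨⟨hq1, hq2⟩, hqlt⟩ := hq
  rw [Finset.mem_range] at hp1 hp2 hq1 hq2
  have hpq' : ({g p.1, g p.2, g (s + (p.2.choose 2 + p.1))} : Finset ℕ)
      = {g q.1, g q.2, g (s + (q.2.choose 2 + q.1))} := hpq
  have hmem : ∀ x : ℕ, x < s + s.choose 2 → x ∈ Finset.range (s + s.choose 2) :=
    fun x hx => Finset.mem_range.2 hx
  have hep := enc_lt hplt hp2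
  have heq := enc_lt hqlt hq2
  have hD : ∀ x : ℕ, x ∈ ({p.1, p.2, s + (p.2.choose 2 + p.1)} : Finset ℕ) →
      x ∈ Finset.range (s + s.choose 2) := by
    intro x hx
    simp only [Finset.mem_insert, Finset.mem_singleton] at hx
    rcases hx with rfl | rfl | rfl <;> rw [Finset.mem_range] <;> omega
  have hD' : ∀ x : ℕ, x ∈ ({q.1, q.2, s + (q.2.choose 2 + q.1)} : Finset ℕ) →
      x ∈ Finset.range (s + s.choose 2) := by
    intro x hx
    simp only [Finset.mem_insert, Finset.mem_singleton] at hx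
    rcases hx with rfl | rfl | rfl <;> rw [Finset.mem_range] <;> omega
  have hsets : ({p.1, p.2, s + (p.2.choose 2 + p.1)} : Finset ℕ)
      = {q.1, q.2, s + (q.2.choose 2 + q.1)} := by
    ext x
    constructor
    · intro hx
      have hgx : g x ∈ ({g q.1, g q.2, g (s + (q.2.choose 2 + q.1))} : Finset ℕ) := by
        rw [← hpq']
        simp only [Finset.mem_insert, Finset.mem_singleton] at hx ⊢
        rcases hx with rfl | rfl | rfl <;> simp
      exact (triple_mem_iff hg (hD' _ (by simp)) (hD' _ (by simp))
        (hD' _ (by simp)) (hD _ hx)).1 hgx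
    · intro hx
      have hgx : g x ∈ ({g p.1, g p.2, g (s + (p.2.choose 2 + p.1))} : Finset ℕ) := by
        rw [hpq']
        simp only [Finset.mem_insert, Finset.mem_singleton] at hx ⊢
        rcases hx with rfl | rfl | rfl <;> simp
      exact (triple_mem_iff hg (hD _ (by simp)) (hD _ (by simp))
        (hD _ (by simp)) (hD' _ hx)).1 hgx
  have := linClique_triple_eq hplt hp2 hqlt hq2 hsets
  exact Prod.ext this.1 this.2

lemma copyEdges_congr {s : ℕ} {g1 g2 : ℕ → ℕ}
    (h : ∀ a < s + s.choose 2, g1 a = g2 a) :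
    copyEdges s g1 = copyEdges s g2 := by
  rw [copyEdges, copyEdges]
  apply Finset.image_congr
  intro p hp
  rw [Finset.mem_coe, Finset.mem_filter, Finset.mem_product] at hp
  obtain ⟨⟨hp1, hp2⟩, hplt⟩ := hp
  rw [Finset.mem_range] at hp1 hp2
  have hep := enc_lt hplt hp2
  show ({g1 p.1, g1 p.2, g1 (s + (p.2.choose 2 + p.1))} : Finset ℕ) = _
  rw [h p.1 (by omega), h p.2 (by omega), h (s + (p.2.choose 2 + p.1)) (by omega)]

end CopyEdges


section Extraction
open Finset

lemma trip_edge_subset_range {V1 V2 V3 : Finset ℕ} {n : ℕ}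
    (hunion : V1 ∪ V2 ∪ V3 = Finset.range n) {e : Finset ℕ}
    (he : e ∈ tripartiteEdges V1 V2 V3) : e ⊆ Finset.range n := by
  rw [tripartiteEdges, Finset.mem_image] at he
  obtain ⟨q, hq, rfl⟩ := he
  rw [Finset.mem_product] at hq
  obtain ⟨h1, hq2⟩ := hq
  rw [Finset.mem_product] at hq2
  obtain ⟨h2, h3⟩ := hq2
  intro x hx
  simp only [Finset.mem_insert, Finset.mem_singleton] at hx
  rw [← hunion]
  rcases hx with rfl | rfl | rfl
  · exact Finset.mem_union_left _ (Finset.mem_union_left _ h1)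
  · exact Finset.mem_union_left _ (Finset.mem_union_right _ h2)
  · exact Finset.mem_union_right _ h3

lemma trip_no_two {V1 V2 V3 W : Finset ℕ} (hd12 : Disjoint V1 V2) (hd13 : Disjoint V1 V3)
    (hd23 : Disjoint V2 V3) (hW : W = V1 ∨ W = V2 ∨ W = V3)
    {e : Finset ℕ} (he : e ∈ tripartiteEdges V1 V2 V3)
    {u v : ℕ} (hu : u ∈ e) (hv : v ∈ e) (huv : u ≠ v) (huW : u ∈ W) (hvW : v ∈ W) :
    False := by
  rw [tripartiteEdges, Finset.mem_image] at he
  obtain ⟨q, hq, rfl⟩ := he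
  rw [Finset.mem_product] at hq
  obtain ⟨h1, hq2⟩ := hq
  rw [Finset.mem_product] at hq2
  obtain ⟨h2, h3⟩ := hq2
  simp only [Finset.mem_insert, Finset.mem_singleton] at hu hv
  rcases hW with rfl | rfl | rfl
  · have key : ∀ x, (x = q.1 ∨ x = q.2.1 ∨ x = q.2.2) → x ∈ W → x = q.1 := by
      rintro x (rfl | rfl | rfl) hx
      · rfl
      · exact (Finset.disjoint_left.1 hd12 hx h2).elim
      · exact (Finset.disjoint_left.1 hd13 hx h3).elim
    exact huv ((key u hu huW).trans (key v hv hvW).symm)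
  · have key : ∀ x, (x = q.1 ∨ x = q.2.1 ∨ x = q.2.2) → x ∈ W → x = q.2.1 := by
      rintro x (rfl | rfl | rfl) hx
      · exact (Finset.disjoint_left.1 hd12 h1 hx).elim
      · rfl
      · exact (Finset.disjoint_left.1 hd23 hx h3).elim
    exact huv ((key u hu huW).trans (key v hv hvW).symm)
  · have key : ∀ x, (x = q.1 ∨ x = q.2.1 ∨ x = q.2.2) → x ∈ W → x = q.2.2 := by
      rintro x (rfl | rfl | rfl) hx
      · exact (Finset.disjoint_left.1 hd13 h1 hx).elim
      · exact (Finset.disjoint_left.1 hd23 h2 hx).elim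
      · rfl
    exact huv ((key u hu huW).trans (key v hv hvW).symm)

lemma extract_copy {t s n : ℕ} (hs : 2 ≤ s) (ht2 : 2 ≤ t) (hts : 3 * s ≤ t + 2)
    {V1 V2 V3 : Finset ℕ} (hd12 : Disjoint V1 V2) (hd13 : Disjoint V1 V3)
    (hd23 : Disjoint V2 V3) (hunion : V1 ∪ V2 ∪ V3 = Finset.range n)
    {R : Finset (Finset ℕ)} (hR : R ⊆ (Finset.range n).powersetCard 3)
    (hcopy : ContainsCopy (linClique t) (tripartiteEdges V1 V2 V3 ∪ R)) :
    ∃ g : ℕ → ℕ, (∀ a < s + s.choose 2, g a < n) ∧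
      (∀ a ∈ Finset.range (s + s.choose 2), ∀ b ∈ Finset.range (s + s.choose 2),
        g a = g b → a = b) ∧ copyEdges s g ⊆ R := by
  obtain ⟨cV, cE, ⟨φ, hinj, hcV, hcE⟩, hsub⟩ := hcopy
  have hφinj : ∀ x < t + t.choose 2, ∀ y < t + t.choose 2, φ x = φ y → x = y := by
    intro x hx y hy hxy
    apply hinj ?_ ?_ hxy
    · rw [linClique]; rw [Finset.coe_range]; exact hx
    · rw [linClique]; rw [Finset.coe_range]; exact hy
  -- edges of the copy
  have hedge : ∀ x y : ℕ, x < y → y < t →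
      ({φ x, φ y, φ (t + (y.choose 2 + x))} : Finset ℕ)
        ∈ tripartiteEdges V1 V2 V3 ∪ R := by
    intro x y hxy hyt
    have he : ({x, y, t + (y.choose 2 + x)} : Finset ℕ) ∈ (linClique t).edges :=
      mem_linClique_edges.2 ⟨x, y, hxy, hyt, rfl⟩
    have him : ({x, y, t + (y.choose 2 + x)} : Finset ℕ).image φ ∈ cE := by
      rw [hcE]
      exact Finset.mem_image_of_mem _ he
    have himeq : ({x, y, t + (y.choose 2 + x)} : Finset ℕ).image φ
        = {φ x, φ y, φ (t + (y.choose 2 + x))} := by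
      simp [Finset.image_insert]
    rw [himeq] at him
    exact hsub him
  have hmemn : ∀ e ∈ tripartiteEdges V1 V2 V3 ∪ R, e ⊆ Finset.range n := by
    intro e he
    rcases Finset.mem_union.1 he with h | h
    · exact trip_edge_subset_range hunion h
    · exact (Finset.mem_powersetCard.1 (hR h)).1
  have hbr : ∀ i, i < t → φ i ∈ Finset.range n := by
    intro i hi
    rcases Nat.lt_or_ge (i + 1) t with h | h
    · exact hmemn _ (hedge i (i + 1) (Nat.lt_succ_self i) h) (by simp)
    · have h1 : 1 ≤ i := by omega
      have := hedge (i - 1) i (by omega) hi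
      exact hmemn _ this (by simp)
  -- pigeonhole: some part receives s branch vertices
  obtain ⟨W, hWor, hWcard⟩ : ∃ W : Finset ℕ, (W = V1 ∨ W = V2 ∨ W = V3) ∧
      s ≤ ((Finset.range t).filter (fun i => φ i ∈ W)).card := by
    by_contra hcon
    push_neg at hcon
    have c1 := hcon V1 (Or.inl rfl)
    have c2 := hcon V2 (Or.inr (Or.inl rfl))
    have c3 := hcon V3 (Or.inr (Or.inr rfl))
    have hcover : Finset.range t ⊆
        ((Finset.range t).filter (fun i => φ i ∈ V1)) ∪
        ((Finset.range t).filter (fun i => φ i ∈ V2)) ∪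
        ((Finset.range t).filter (fun i => φ i ∈ V3)) := by
      intro i hi
      have := hbr i (Finset.mem_range.1 hi)
      rw [← hunion] at this
      rcases Finset.mem_union.1 this with h | h
      · rcases Finset.mem_union.1 h with h' | h'
        · exact Finset.mem_union_left _ (Finset.mem_union_left _
            (Finset.mem_filter.2 ⟨hi, h'⟩))
        · exact Finset.mem_union_left _ (Finset.mem_union_right _
            (Finset.mem_filter.2 ⟨hi, h'⟩))
      · exact Finset.mem_union_right _ (Finset.mem_filter.2 ⟨hi, h⟩)
    have := Finset.card_le_card hcover
    rw [Finset.card_range] at this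
    have hu1 := Finset.card_union_le
      (((Finset.range t).filter (fun i => φ i ∈ V1)) ∪
        ((Finset.range t).filter (fun i => φ i ∈ V2)))
      ((Finset.range t).filter (fun i => φ i ∈ V3))
    have hu2 := Finset.card_union_le
      ((Finset.range t).filter (fun i => φ i ∈ V1))
      ((Finset.range t).filter (fun i => φ i ∈ V2))
    omega
  obtain ⟨S, hSsub, hScard⟩ := Finset.exists_subset_card_eq hWcard
  -- the ordered list of the s chosen branch vertices
  set σ : ℕ → ℕ := fun a => if h : a < s then (S.orderEmbOfFin hScard ⟨a, h⟩ : ℕ) else 0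
    with hσdef
  have hσS : ∀ a, a < s → σ a ∈ S := by
    intro a ha
    rw [hσdef]
    simp only [dif_pos ha]
    exact Finset.orderEmbOfFin_mem S hScard _
  have hσt : ∀ a, a < s → σ a < t := by
    intro a ha
    have := hSsub (hσS a ha)
    rw [Finset.mem_filter, Finset.mem_range] at this
    exact this.1
  have hσW : ∀ a, a < s → φ (σ a) ∈ W := by
    intro a ha
    have := hSsub (hσS a ha)
    rw [Finset.mem_filter] at this
    exact this.2
  have hσmono : ∀ a b, a < b → b < s → σ a < σ b := by
    intro a b hab hbs
    rw [hσdef]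
    simp only [dif_pos (hab.trans hbs), dif_pos hbs]
    exact (S.orderEmbOfFin hScard).strictMono (by exact_mod_cast hab)
  -- the edges between chosen branch vertices are in R
  have hRedge : ∀ i j, i < j → j < s →
      ({φ (σ i), φ (σ j), φ (t + ((σ j).choose 2 + σ i))} : Finset ℕ) ∈ R := by
    intro i j hij hjs
    have hij' : σ i < σ j := hσmono i j hij hjs
    have hjt : σ j < t := hσt j hjs
    rcases Finset.mem_union.1 (hedge (σ i) (σ j) hij' hjt) with h | h
    · exfalso
      have hne : φ (σ i) ≠ φ (σ j) := by
        intro hq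
        have := hφinj (σ i) (by omega) (σ j) (by omega) hq
        omega
      exact trip_no_two hd12 hd13 hd23 hWor h (by simp) (by simp) hne
        (hσW i (hij.trans hjs)) (hσW j hjs)
    · exact h
  -- the final embedding
  refine ⟨fun a => φ (if a < s then σ a
    else t + ((σ (dec2 (a - s))).choose 2 + σ (dec1 (a - s)))), ?_, ?_, ?_⟩
  · -- values in range n
    intro a ha
    by_cases has : a < s
    · simp only [if_pos has]
      have := hσW a has
      have hWsub : W ⊆ Finset.range n := by
        rw [← hunion]
        rcases hWor with rfl | rfl | rfl
        · intro x hx; exact Finset.mem_union_left _ (Finset.mem_union_left _ hx)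
        · intro x hx; exact Finset.mem_union_left _ (Finset.mem_union_right _ hx)
        · intro x hx; exact Finset.mem_union_right _ hx
      exact Finset.mem_range.1 (hWsub this)
    · simp only [if_neg has]
      push_neg at has
      have hk : a - s < s.choose 2 := by omega
      obtain ⟨hd1, hd2, hd3⟩ := dec_lt hk
      have := hRedge (dec1 (a - s)) (dec2 (a - s)) hd1 hd2
      have hsubn := (Finset.mem_powersetCard.1 (hR this)).1
      exact Finset.mem_range.1 (hsubn (by simp))
  · -- injectivity
    intro a ha b hb hab
    rw [Finset.mem_range] at ha hb
    -- the index map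
    have hιlt : ∀ c, c < s + s.choose 2 →
        (if c < s then σ c
          else t + ((σ (dec2 (c - s))).choose 2 + σ (dec1 (c - s)))) < t + t.choose 2 := by
      intro c hc
      by_cases hcs : c < s
      · rw [if_pos hcs]
        have := hσt c hcs
        omega
      · rw [if_neg hcs]
        push_neg at hcs
        have hk : c - s < s.choose 2 := by omega
        obtain ⟨hd1, hd2, hd3⟩ := dec_lt hk
        have h1 : σ (dec1 (c - s)) < σ (dec2 (c - s)) := hσmono _ _ hd1 hd2
        have h2 : σ (dec2 (c - s)) < t := hσt _ hd2
        have := enc_lt h1 h2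
        omega
    have hιeq : (if a < s then σ a
          else t + ((σ (dec2 (a - s))).choose 2 + σ (dec1 (a - s))))
        = (if b < s then σ b
          else t + ((σ (dec2 (b - s))).choose 2 + σ (dec1 (b - s)))) :=
      hφinj _ (hιlt a ha) _ (hιlt b hb) hab
    have hσinj : ∀ x y, x < s → y < s → σ x = σ y → x = y := by
      intro x y hx hy hxy
      rcases Nat.lt_trichotomy x y with h | h | h
      · exact absurd hxy (Nat.ne_of_lt (hσmono x y h hy))
      · exact h
      · exact absurd hxy.symm (Nat.ne_of_lt (hσmono y x h hx))
    by_cases has : a < s <;> by_cases hbs : b < s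
    · rw [if_pos has, if_pos hbs] at hιeq
      exact hσinj a b has hbs hιeq
    · exfalso
      rw [if_pos has, if_neg hbs] at hιeq
      have := hσt a has
      omega
    · exfalso
      rw [if_neg has, if_pos hbs] at hιeq
      have := hσt b hbs
      omega
    · rw [if_neg has, if_neg hbs] at hιeq
      push_neg at has hbs
      have hka : a - s < s.choose 2 := by omega
      have hkb : b - s < s.choose 2 := by omega
      obtain ⟨ha1, ha2, ha3⟩ := dec_lt hka
      obtain ⟨hb1, hb2, hb3⟩ := dec_lt hkb
      have hidx : (σ (dec2 (a - s))).choose 2 + σ (dec1 (a - s))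
          = (σ (dec2 (b - s))).choose 2 + σ (dec1 (b - s)) := by omega
      obtain ⟨he1, he2⟩ := enc_inj (hσmono _ _ ha1 ha2) (hσmono _ _ hb1 hb2) hidx
      have hi : dec1 (a - s) = dec1 (b - s) := hσinj _ _ (ha1.trans ha2) (hb1.trans hb2) he1
      have hj : dec2 (a - s) = dec2 (b - s) := hσinj _ _ ha2 hb2 he2
      rw [hi, hj] at ha3
      omega
  · -- the copied edges lie in R
    intro e he
    rw [copyEdges, Finset.mem_image] at he
    obtain ⟨q, hq, rfl⟩ := he
    rw [Finset.mem_filter, Finset.mem_product, Finset.mem_range, Finset.mem_range] at hq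
    obtain ⟨⟨hq1, hq2⟩, hqlt⟩ := hq
    have henc := enc_lt hqlt hq2
    have e1 : (if q.1 < s then σ q.1
        else t + ((σ (dec2 (q.1 - s))).choose 2 + σ (dec1 (q.1 - s)))) = σ q.1 :=
      if_pos hq1
    have e2 : (if q.2 < s then σ q.2
        else t + ((σ (dec2 (q.2 - s))).choose 2 + σ (dec1 (q.2 - s)))) = σ q.2 :=
      if_pos hq2
    have hnot : ¬ (s + (q.2.choose 2 + q.1) < s) := by omega
    have hsa : s + (q.2.choose 2 + q.1) - s = q.2.choose 2 + q.1 := by omega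
    have e3 : (if s + (q.2.choose 2 + q.1) < s then σ (s + (q.2.choose 2 + q.1))
        else t + ((σ (dec2 (s + (q.2.choose 2 + q.1) - s))).choose 2
          + σ (dec1 (s + (q.2.choose 2 + q.1) - s))))
        = t + ((σ q.2).choose 2 + σ q.1) := by
      rw [if_neg hnot, hsa, dec2_enc hqlt, dec1_enc hqlt]
    show ({φ _, φ _, φ _} : Finset ℕ) ∈ R
    rw [e1, e2, e3]
    exact hRedge q.1 q.2 hqlt hq2

end Extraction

/-- Let `t ≥ 4` and, for each `n`, let `H₀(n)` be the complete balanced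
tripartite 3-graph on `[n]` with parts `V₁ n`, `V₂ n`, `V₃ n`. If `p(n)·n^{1/m(⌈t/3⌉)} → 0`,
then `Pr[K̃_t ⊆ H₀ ∪ ℍ(n,p)] → 0`. -/
theorem perturbed_tripartite_no_linear_clique (t : ℕ) (ht : 4 ≤ t)
    (V1 V2 V3 : ℕ → Finset ℕ)
    (hd12 : ∀ n : ℕ, Disjoint (V1 n) (V2 n)) (hd13 : ∀ n : ℕ, Disjoint (V1 n) (V3 n))
    (hd23 : ∀ n : ℕ, Disjoint (V2 n) (V3 n))
    (hunion : ∀ n : ℕ, V1 n ∪ V2 n ∪ V3 n = Finset.range n)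
    (hc12 : ∀ n : ℕ, (V1 n).card ≤ (V2 n).card) (hc23 : ∀ n : ℕ, (V2 n).card ≤ (V3 n).card)
    (hc31 : ∀ n : ℕ, (V3 n).card ≤ (V1 n).card + 1)
    (p : ℕ → ℝ) (hp0 : ∀ n : ℕ, 0 ≤ p n) (hp1 : ∀ n : ℕ, p n ≤ 1)
    (hp : Tendsto (fun n => p n * (n : ℝ) ^ (1 / mDen (linClique ((t + 2) / 3))))
      atTop (nhds 0)) :
    Tendsto (fun n => PrH n (p n) fun R =>
        ContainsCopy (linClique t) (tripartiteEdges (V1 n) (V2 n) (V3 n) ∪ R))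
      atTop (nhds 0) := by
  classical
  set s := (t + 2) / 3 with hsdef
  have hs2 : 2 ≤ s := by omega
  have hts : 3 * s ≤ t + 2 := by omega
  have ht2 : 2 ≤ t := by omega
  set v := s + s.choose 2 with hvdef
  set e := s.choose 2 with hedef
  have he1 : 1 ≤ e := by
    have h22 : Nat.choose 2 2 ≤ s.choose 2 := Nat.choose_le_choose 2 hs2
    simp only [Nat.choose_self] at h22
    omega
  have hcast2 : 2 * (e : ℝ) = (s : ℝ) * ((s : ℝ) - 1) := by
    have h2 : 2 * s.choose 2 = s * (s - 1) := two_mul_choose_two s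
    have hsub : ((s - 1 : ℕ) : ℝ) = (s : ℝ) - 1 := by
      rw [Nat.cast_sub (by omega)]; simp
    rw [hedef, ← hsub]
    exact_mod_cast h2
  -- the key quantitative bound
  have hbound : ∀ n : ℕ, PrH n (p n) (fun R =>
      ContainsCopy (linClique t) (tripartiteEdges (V1 n) (V2 n) (V3 n) ∪ R))
      ≤ (n : ℝ) ^ v * (p n) ^ e := by
    intro n
    set ext : (Fin v → ℕ) → ℕ → ℕ :=
      fun gg a => if h : a < v then gg ⟨a, h⟩ else 0 with hextdef
    set 𝒞 : Finset (Fin v → ℕ) :=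
      (Fintype.piFinset fun _ : Fin v => Finset.range n).filter
        (fun gg => (copyEdges s (ext gg)).card = e ∧
          copyEdges s (ext gg) ⊆ (Finset.range n).powersetCard 3) with hCdef
    have himp : ∀ R, R ⊆ (Finset.range n).powersetCard 3 →
        ContainsCopy (linClique t) (tripartiteEdges (V1 n) (V2 n) (V3 n) ∪ R) →
        ∃ gg ∈ 𝒞, copyEdges s (ext gg) ⊆ R := by
      intro R hRsub hcopy
      obtain ⟨g, hgn, hginj, hgR⟩ := extract_copy hs2 ht2 hts (hd12 n) (hd13 n) (hd23 n)
        (hunion n) hRsub hcopy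
      have hcongr : copyEdges s (ext (fun i : Fin v => g i)) = copyEdges s g := by
        apply copyEdges_congr
        intro a ha
        rw [hextdef]
        exact dif_pos ha
      refine ⟨fun i : Fin v => g i, ?_, ?_⟩
      · rw [hCdef, Finset.mem_filter]
        refine ⟨?_, ?_, ?_⟩
        · rw [Fintype.mem_piFinset]
          intro i
          exact Finset.mem_range.2 (hgn i i.isLt)
        · rw [hcongr]
          exact copyEdges_card hginj
        · rw [hcongr]
          exact hgR.trans hRsub
      · rw [hcongr]
        exact hgR
    have hub := PrH_union_bound (hp0 n) (hp1 n) 𝒞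
      (fun gg R => copyEdges s (ext gg) ⊆ R) _ himp
    refine hub.trans ?_
    have heach : ∀ gg ∈ 𝒞, PrH n (p n) (fun R => copyEdges s (ext gg) ⊆ R) = (p n) ^ e := by
      intro gg hgg
      rw [hCdef, Finset.mem_filter] at hgg
      rw [PrH_superset hgg.2.2, hgg.2.1]
    rw [Finset.sum_congr rfl heach, Finset.sum_const, nsmul_eq_mul]
    have hCle : (𝒞.card : ℝ) ≤ (n : ℝ) ^ v := by
      have h1 : 𝒞.card ≤ (Fintype.piFinset fun _ : Fin v => Finset.range n).card :=
        Finset.card_filter_le _ _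
      have h2 : (Fintype.piFinset fun _ : Fin v => Finset.range n).card = n ^ v := by
        rw [Fintype.card_piFinset]
        simp [Finset.card_range]
      rw [h2] at h1
      calc (𝒞.card : ℝ) ≤ ((n ^ v : ℕ) : ℝ) := by exact_mod_cast h1
        _ = (n : ℝ) ^ v := by push_cast; ring
    exact mul_le_mul_of_nonneg_right hCle (pow_nonneg (hp0 n) e)
  -- pass to the limit
  have hm : mDen (linClique ((t + 2) / 3)) = ((s : ℝ) - 1) / ((s : ℝ) + 1) :=
    mDen_linClique hs2
  have hs1ne : (s : ℝ) - 1 ≠ 0 := by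
    have : (2 : ℝ) ≤ (s : ℝ) := by exact_mod_cast hs2
    linarith
  have hαe : (1 / mDen (linClique ((t + 2) / 3))) * (e : ℝ) = (v : ℝ) := by
    rw [hm, one_div_div]
    have hv : (v : ℝ) = (s : ℝ) + (e : ℝ) := by rw [hvdef, hedef]; push_cast; ring
    rw [hv, div_mul_eq_mul_div, div_eq_iff hs1ne]
    linear_combination hcast2
  have hupper : ∀ n : ℕ, 1 ≤ n → (n : ℝ) ^ v * (p n) ^ e
      ≤ (p n * (n : ℝ) ^ (1 / mDen (linClique ((t + 2) / 3)))) ^ e := by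
    intro n hn
    have hn0 : (0 : ℝ) ≤ (n : ℝ) := Nat.cast_nonneg n
    have hrw : ((n : ℝ) ^ (1 / mDen (linClique ((t + 2) / 3)))) ^ e = (n : ℝ) ^ v := by
      rw [← Real.rpow_natCast ((n : ℝ) ^ (1 / mDen (linClique ((t + 2) / 3)))) e,
        ← Real.rpow_mul hn0, hαe, Real.rpow_natCast]
    rw [mul_pow, hrw]
    ring_nf
    exact le_refl _
  have hlim : Tendsto (fun n => (p n * (n : ℝ) ^ (1 / mDen (linClique ((t + 2) / 3)))) ^ e)
      atTop (nhds 0) := by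
    have := hp.pow e
    rwa [zero_pow (by omega : e ≠ 0)] at this
  apply tendsto_of_tendsto_of_tendsto_of_le_of_le' (tendsto_const_nhds : Tendsto (fun _ : ℕ => (0:ℝ)) atTop (nhds 0)) hlim
  · exact Filter.Eventually.of_forall fun n => PrH_nonneg (hp0 n) (hp1 n) _
  · rw [Filter.eventually_atTop]
    exact ⟨1, fun n hn => (hbound n).trans (hupper n hn)⟩
end

section
/- (Two-Sided Triangle Counting Lemma.) Let P = (X ∪ Y ∪ Z, E_P) be a tripartite graph such that P[X,Y] and P[X,Z] are both (δ,d)-regular, and let X' ⊆ X be a set of size |X'| ≥ δ|X|. Then (d−δ)·d·|X'|·e(P[Y,Z]) − 2δ|X||Y||Z| ≤ |K_3(P, X')| ≤ (d+δ)·d·|X'|·e(P[Y,Z]) + 2δ|X||Y||Z|, where K_3(P, X') denotes the set of triangles of P meeting X'. -/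
open Finset Filter

attribute [local instance] Classical.propDecidable

/-
Let `T` be the number of triangles meeting `X'` and `S = ∑_{y ∈ Y} |N_{X'}(y)| |N_Z(y)|` the
number of paths `X' – Y – Z`. Counting triangles through their middle vertex,
`T = ∑_y e(N_{X'}(y), N_Z(y))`, which regularity of `P[X,Z]` makes `d S ± δ|X||Y||Z|`; counting
paths through their end in `Z`, `S = ∑_z e(X', N_Y(z))`, which regularity of `P[X,Y]`
makes `d |X'| e(Y,Z) ± δ|X||Y||Z|`. Chaining the two estimates, with
`0 ≤ T ≤ S ≤ |X'| e(Y,Z) ≤ |X||Y||Z|` and the constraints `0 ≤ δ ≤ 1`, `-δ ≤ d ≤ 1 + δ`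
forced by regularity and `δ|X| ≤ |X'|`, gives both bounds.
-/

def nbhd (G : Finset (Finset ℕ)) (A : Finset ℕ) (v : ℕ) : Finset ℕ :=
  A.filter fun a => ({a, v} : Finset ℕ) ∈ G

lemma nbhd_subset (G : Finset (Finset ℕ)) (A : Finset ℕ) (v : ℕ) : nbhd G A v ⊆ A :=
  filter_subset _ _

lemma eq_of_pair_eq_pair_of_disjoint {A B : Finset ℕ} (hAB : Disjoint A B) {a b a' b' : ℕ}
    (ha : a ∈ A) (hb : b ∈ B) (ha' : a' ∈ A) (hb' : b' ∈ B)
    (h : ({a, b} : Finset ℕ) = {a', b'}) : a = a' ∧ b = b' := by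
  have h1 : a ∈ ({a', b'} : Finset ℕ) := h ▸ by simp
  have h2 : b ∈ ({a', b'} : Finset ℕ) := h ▸ by simp
  rw [disjoint_left] at hAB
  simp only [mem_insert, mem_singleton] at h1 h2
  grind

lemma eq_of_triple_eq_triple_of_disjoint {A B C : Finset ℕ} (hAB : Disjoint A B)
    (hAC : Disjoint A C) (hBC : Disjoint B C) {a b c a' b' c' : ℕ}
    (ha : a ∈ A) (hb : b ∈ B) (hc : c ∈ C) (ha' : a' ∈ A) (hb' : b' ∈ B) (hc' : c' ∈ C)
    (h : ({a, b, c} : Finset ℕ) = {a', b', c'}) : a = a' ∧ b = b' ∧ c = c' := by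
  have h1 : a ∈ ({a', b', c'} : Finset ℕ) := h ▸ by simp
  have h2 : b ∈ ({a', b', c'} : Finset ℕ) := h ▸ by simp
  have h3 : c ∈ ({a', b', c'} : Finset ℕ) := h ▸ by simp
  rw [disjoint_left] at hAB hAC hBC
  simp only [mem_insert, mem_singleton] at h1 h2 h3
  grind

lemma e2_le_card_mul_card (G : Finset (Finset ℕ)) (A B : Finset ℕ) :
    e2 G A B ≤ #A * #B := by
  calc e2 G A B ≤ #(K2 A B) := by
        refine card_le_card fun e he => ?_
        obtain ⟨-, a, ha, b, hb, rfl⟩ := mem_filter.mp he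
        exact mem_image.mpr ⟨(a, b), mem_product.mpr ⟨ha, hb⟩, rfl⟩
    _ ≤ #(A ×ˢ B) := card_image_le
    _ = #A * #B := card_product A B

lemma e2_eq_card_filter_product (G : Finset (Finset ℕ)) {A B : Finset ℕ} (hAB : Disjoint A B) :
    e2 G A B = #((A ×ˢ B).filter fun p => ({p.1, p.2} : Finset ℕ) ∈ G) := by
  symm
  apply card_bij (fun p _ => ({p.1, p.2} : Finset ℕ))
  · intro p hp
    obtain ⟨hp, hG⟩ := mem_filter.mp hp
    obtain ⟨ha, hb⟩ := mem_product.mp hp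
    exact mem_filter.mpr ⟨hG, p.1, ha, p.2, hb, rfl⟩
  · intro p hp q hq h
    obtain ⟨ha, hb⟩ := mem_product.mp (mem_filter.mp hp).1
    obtain ⟨ha', hb'⟩ := mem_product.mp (mem_filter.mp hq).1
    obtain ⟨h1, h2⟩ := eq_of_pair_eq_pair_of_disjoint hAB ha hb ha' hb' h
    exact Prod.ext h1 h2
  · intro e he
    obtain ⟨hG, a, ha, b, hb, rfl⟩ := mem_filter.mp he
    exact ⟨(a, b), mem_filter.mpr ⟨mem_product.mpr ⟨ha, hb⟩, hG⟩, rfl⟩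

lemma e2_eq_sum_card_nbhd (G : Finset (Finset ℕ)) {A B : Finset ℕ} (hAB : Disjoint A B) :
    e2 G A B = ∑ b ∈ B, #(nbhd G A b) := by
  simp only [e2_eq_card_filter_product G hAB, nbhd, card_filter, sum_product_right]

lemma card_triSets_eq_card_filter_product (G : Finset (Finset ℕ)) {A B C : Finset ℕ}
    (hAB : Disjoint A B) (hAC : Disjoint A C) (hBC : Disjoint B C) :
    #(triSets G A B C) = #((A ×ˢ B ×ˢ C).filter fun p =>
      ({p.1, p.2.1} : Finset ℕ) ∈ G ∧ ({p.1, p.2.2} : Finset ℕ) ∈ G ∧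
        ({p.2.1, p.2.2} : Finset ℕ) ∈ G) := by
  refine card_image_of_injOn fun p hp q hq h => ?_
  obtain ⟨ha, hb, hc⟩ : p.1 ∈ A ∧ p.2.1 ∈ B ∧ p.2.2 ∈ C := by
    simpa using (mem_filter.mp hp).1
  obtain ⟨ha', hb', hc'⟩ : q.1 ∈ A ∧ q.2.1 ∈ B ∧ q.2.2 ∈ C := by
    simpa using (mem_filter.mp hq).1
  obtain ⟨h1, h2, h3⟩ := eq_of_triple_eq_triple_of_disjoint hAB hAC hBC ha hb hc ha' hb' hc' h
  exact Prod.ext h1 (Prod.ext h2 h3)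

lemma card_triSets_eq_sum_e2_nbhd (G : Finset (Finset ℕ)) {A B C : Finset ℕ}
    (hAB : Disjoint A B) (hAC : Disjoint A C) (hBC : Disjoint B C) :
    #(triSets G A B C) = ∑ b ∈ B, e2 G (nbhd G A b) (nbhd G C b) := by
  have he2 (b : ℕ) :=
    e2_eq_card_filter_product G (hAC.mono (nbhd_subset G A b) (nbhd_subset G C b))
  simp only [card_triSets_eq_card_filter_product G hAB hAC hBC, he2]
  simp only [card_filter, sum_product, nbhd, sum_filter]
  rw [sum_comm]
  refine sum_congr rfl fun b _ => sum_congr rfl fun a _ => ?_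
  split_ifs with hab <;> simp only [hab, pair_comm b, ← ite_and, true_and, false_and, and_comm,
    if_false, sum_const_zero]

lemma sum_card_nbhd_mul_card_nbhd (G : Finset (Finset ℕ)) {A B : Finset ℕ} (C : Finset ℕ)
    (hAB : Disjoint A B) :
    ∑ b ∈ B, #(nbhd G A b) * #(nbhd G C b) = ∑ c ∈ C, e2 G A (nbhd G B c) := by
  rw [sum_congr rfl fun c _ => e2_eq_sum_card_nbhd G (hAB.mono_right (nbhd_subset G B c))]
  simp only [nbhd, sum_filter]
  rw [sum_comm]
  refine sum_congr rfl fun b _ => ?_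
  rw [← sum_filter, sum_const, smul_eq_mul, mul_comm]
  simp only [pair_comm b]

lemma card_triSets_le_sum_card_nbhd_mul_card_nbhd (G : Finset (Finset ℕ)) {A B C : Finset ℕ}
    (hAB : Disjoint A B) (hAC : Disjoint A C) (hBC : Disjoint B C) :
    #(triSets G A B C) ≤ ∑ b ∈ B, #(nbhd G A b) * #(nbhd G C b) :=
  card_triSets_eq_sum_e2_nbhd G hAB hAC hBC ▸ sum_le_sum fun _ _ => e2_le_card_mul_card _ _ _

lemma sum_card_nbhd_mul_card_nbhd_le (G : Finset (Finset ℕ)) {A B C : Finset ℕ}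
    (hAB : Disjoint A B) (hBC : Disjoint B C) :
    ∑ b ∈ B, #(nbhd G A b) * #(nbhd G C b) ≤ #A * e2 G B C := by
  rw [sum_card_nbhd_mul_card_nbhd G C hAB, e2_eq_sum_card_nbhd G hBC, mul_sum]
  exact sum_le_sum fun _ _ => e2_le_card_mul_card _ _ _

namespace BipRegular

variable {δ d : ℝ} {G : Finset (Finset ℕ)} {A' A B C : Finset ℕ}

lemma nonneg (h : BipRegular δ d G A B) (hA : A.Nonempty) (hB : B.Nonempty) : 0 ≤ δ := by
  have hAB : (0 : ℝ) < #A * #B := by have := hA.card_pos; have := hB.card_pos; positivity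
  have h0 := (abs_nonneg _).trans (h ∅ (empty_subset A) ∅ (empty_subset B))
  rw [mul_assoc] at h0
  exact nonneg_of_mul_nonneg_left h0 hAB

lemma density_bounds (h : BipRegular δ d G A B) (hA : A.Nonempty) (hB : B.Nonempty) :
    -δ ≤ d ∧ d ≤ 1 + δ := by
  have hAB : (0 : ℝ) < #A * #B := by have := hA.card_pos; have := hB.card_pos; positivity
  have he : (e2 G A B : ℝ) ≤ #A * #B := by exact_mod_cast e2_le_card_mul_card G A B
  have hfull := abs_le.mp (h A subset_rfl B subset_rfl)
  constructor <;> nlinarith [(e2 G A B).cast_nonneg (α := ℝ)]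

lemma abs_sum_e2_sub_le (h : BipRegular δ d G A B) {ι : Type*} (I : Finset ι)
    {U W : ι → Finset ℕ} (hU : ∀ i ∈ I, U i ⊆ A) (hW : ∀ i ∈ I, W i ⊆ B) :
    |∑ i ∈ I, (e2 G (U i) (W i) : ℝ) - d * ∑ i ∈ I, (#(U i) : ℝ) * #(W i)|
      ≤ #I * (δ * #A * #B) := by
  rw [mul_sum, ← sum_sub_distrib, ← nsmul_eq_mul]
  refine (abs_sum_le_sum_abs _ _).trans (sum_le_card_nsmul _ _ _ fun i hi => ?_)
  simpa only [mul_assoc] using h _ (hU i hi) _ (hW i hi)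

lemma abs_card_triSets_sub_le (h : BipRegular δ d G A' C) (hA : A ⊆ A')
    (hAB : Disjoint A B) (hAC : Disjoint A C) (hBC : Disjoint B C) :
    |(#(triSets G A B C) : ℝ) - d * (∑ b ∈ B, #(nbhd G A b) * #(nbhd G C b) : ℕ)|
      ≤ δ * (#A' * #B * #C : ℕ) := by
  have := h.abs_sum_e2_sub_le B (fun b _ => (nbhd_subset G A b).trans hA)
    (fun b _ => nbhd_subset G C b)
  rw [card_triSets_eq_sum_e2_nbhd G hAB hAC hBC]
  push_cast
  convert this using 1
  ring

lemma abs_sum_card_nbhd_mul_card_nbhd_sub_le (h : BipRegular δ d G A' B) (hA : A ⊆ A')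
    (hAB : Disjoint A B) (hBC : Disjoint B C) :
    |(∑ b ∈ B, #(nbhd G A b) * #(nbhd G C b) : ℕ) - d * (#A * e2 G B C : ℕ)|
      ≤ δ * (#A' * #B * #C : ℕ) := by
  have := h.abs_sum_e2_sub_le C (U := fun _ => A) (fun _ _ => hA)
    (fun c _ => nbhd_subset G B c)
  rw [sum_card_nbhd_mul_card_nbhd G C hAB, e2_eq_sum_card_nbhd G hBC, mul_sum]
  push_cast
  convert this using 1
  ring

end BipRegular

section

variable {δ d T S m N : ℝ}

lemma lower_bound_of_chained_approx (hδ : 0 ≤ δ) (hδ1 : δ ≤ 1) (hd : -δ ≤ d) (hd' : d ≤ 1 + δ)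
    (hT : 0 ≤ T) (hTS : T ≤ S) (hSm : S ≤ m) (hmN : m ≤ N)
    (hTS' : |T - d * S| ≤ δ * N) (hSm' : |S - d * m| ≤ δ * N) :
    (d - δ) * d * m - 2 * δ * N ≤ T := by
  have hm : 0 ≤ m := by linarith
  have hδN : 0 ≤ δ * N := mul_nonneg hδ (by linarith)
  rcases lt_or_ge d 0 with hneg | hnn
  · have : (d - δ) * d ≤ 2 * δ := by nlinarith
    nlinarith
  have hT' : d * d * m - (d + 1) * (δ * N) ≤ T := by
    nlinarith [(abs_le.mp hTS').1, (abs_le.mp hSm').1]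
  rcases le_or_gt d 1 with hle | hgt
  · nlinarith [mul_nonneg hδ (mul_nonneg hnn hm), mul_nonneg (sub_nonneg.mpr hle) hδN]
  rcases le_or_gt ((d - 1) * N) (d * m) with hc | hc
  · nlinarith [mul_nonneg hδ (sub_nonneg.mpr hc)]
  · -- here `d * m < (d - 1) * N ≤ δ * N`, so the claimed lower bound is negative
    have : (d - δ) * d * m ≤ δ * N := by
      rcases le_or_gt d δ with h | h <;> nlinarith [mul_nonneg hnn hm]
    nlinarith

lemma upper_bound_of_chained_approx (hδ : 0 ≤ δ) (hδ1 : δ ≤ 1) (hd : -δ ≤ d)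
    (hT : 0 ≤ T) (hTS : T ≤ S) (hSm : S ≤ m) (hmN : m ≤ N)
    (hTS' : |T - d * S| ≤ δ * N) (hSm' : |S - d * m| ≤ δ * N) :
    T ≤ (d + δ) * d * m + 2 * δ * N := by
  have hm : 0 ≤ m := by linarith
  have hδN : 0 ≤ δ * N := mul_nonneg hδ (by linarith)
  rcases lt_or_ge d 0 with hneg | hnn
  · have : -δ ≤ (d + δ) * d := by nlinarith
    nlinarith [(abs_le.mp hTS').2]
  rcases le_or_gt d 1 with hle | hgt
  · have hT' : T ≤ d * d * m + (d + 1) * (δ * N) := by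
      nlinarith [(abs_le.mp hTS').2, (abs_le.mp hSm').2]
    nlinarith [mul_nonneg hδ (mul_nonneg hnn hm), mul_nonneg (sub_nonneg.mpr hle) hδN]
  · have : 1 ≤ (d + δ) * d := by nlinarith
    nlinarith

end

theorem two_sided_triangle_counting_general (δ d : ℝ) (X Y Z X' : Finset ℕ)
    (P : Finset (Finset ℕ))
    (hXY : Disjoint X Y) (hXZ : Disjoint X Z) (hYZ : Disjoint Y Z)
    (hregXY : BipRegular δ d P X Y) (hregXZ : BipRegular δ d P X Z)
    (hX'sub : X' ⊆ X) (hX'card : δ * X.card ≤ (X'.card : ℝ)) :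
    (d - δ) * d * X'.card * (e2 P Y Z : ℝ) - 2 * δ * X.card * Y.card * Z.card
        ≤ ((triSets P X' Y Z).card : ℝ) ∧
      ((triSets P X' Y Z).card : ℝ)
        ≤ (d + δ) * d * X'.card * (e2 P Y Z : ℝ) + 2 * δ * X.card * Y.card * Z.card := by
  have hX'Y := hXY.mono_left hX'sub
  have hX'Z := hXZ.mono_left hX'sub
  have hTS := card_triSets_le_sum_card_nbhd_mul_card_nbhd P hX'Y hX'Z hYZ
  have hSm := sum_card_nbhd_mul_card_nbhd_le P hX'Y hYZ
  have hmN : #X' * e2 P Y Z ≤ #X * #Y * #Z := by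
    rw [mul_assoc]; exact Nat.mul_le_mul (card_le_card hX'sub) (e2_le_card_mul_card P Y Z)
  have hTS' := hregXZ.abs_card_triSets_sub_le hX'sub hX'Y hX'Z hYZ
  have hSm' := hregXY.abs_sum_card_nbhd_mul_card_nbhd_sub_le (C := Z) hX'sub hX'Y hYZ
  rcases Nat.eq_zero_or_pos (#X * #Y * #Z) with hN | hN
  · have hm : (#X' : ℝ) * e2 P Y Z = 0 := by exact_mod_cast Nat.eq_zero_of_le_zero (hN ▸ hmN)
    have hT : (#(triSets P X' Y Z) : ℝ) = 0 := by
      exact_mod_cast Nat.eq_zero_of_le_zero (hN ▸ hTS.trans (hSm.trans hmN))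
    have hN' : (#X : ℝ) * #Y * #Z = 0 := by exact_mod_cast hN
    constructor
    · linear_combination (d - δ) * d * hm - 2 * δ * hN' - hT
    · linear_combination hT - (d + δ) * d * hm - 2 * δ * hN'
  obtain ⟨⟨hX, hY⟩, -⟩ : (X.Nonempty ∧ Y.Nonempty) ∧ Z.Nonempty := by
    simpa only [Nat.pos_iff_ne_zero, mul_ne_zero_iff, card_ne_zero] using hN
  have hδ := hregXY.nonneg hX hY
  obtain ⟨hd, hd'⟩ := hregXY.density_bounds hX hY
  have hδ1 : δ ≤ 1 := by
    have : δ * #X ≤ 1 * #X := by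
      simpa using hX'card.trans (by exact_mod_cast card_le_card hX'sub)
    exact le_of_mul_le_mul_right this (by exact_mod_cast hX.card_pos)
  have hlow := lower_bound_of_chained_approx hδ hδ1 hd hd' (Nat.cast_nonneg _)
    (Nat.cast_le.mpr hTS) (Nat.cast_le.mpr hSm) (Nat.cast_le.mpr hmN) hTS' hSm'
  have hup := upper_bound_of_chained_approx hδ hδ1 hd (Nat.cast_nonneg _)
    (Nat.cast_le.mpr hTS) (Nat.cast_le.mpr hSm) (Nat.cast_le.mpr hmN) hTS' hSm'
  push_cast at hlow hup
  constructor <;> linarith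

/-- (Two-Sided Triangle Counting Lemma.) -/
theorem two_sided_triangle_counting (δ d : ℝ) (X Y Z X' : Finset ℕ)
    (P : Finset (Finset ℕ))
    (hXY : Disjoint X Y) (hXZ : Disjoint X Z) (hYZ : Disjoint Y Z)
    (hP : ∀ e ∈ P, e ∈ K2 X Y ∨ e ∈ K2 X Z ∨ e ∈ K2 Y Z)
    (hregXY : BipRegular δ d P X Y) (hregXZ : BipRegular δ d P X Z)
    (hX'sub : X' ⊆ X) (hX'card : δ * X.card ≤ (X'.card : ℝ)) :
    (d - δ) * d * X'.card * (e2 P Y Z : ℝ) - 2 * δ * X.card * Y.card * Z.card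
        ≤ ((triSets P X' Y Z).card : ℝ) ∧
      ((triSets P X' Y Z).card : ℝ)
        ≤ (d + δ) * d * X'.card * (e2 P Y Z : ℝ) + 2 * δ * X.card * Y.card * Z.card :=
  two_sided_triangle_counting_general δ d X Y Z X' P hXY hXZ hYZ hregXY hregXZ hX'sub hX'card
end

section
/- For every d > 0, every positive integer t, and every c₁ ∈ (0,1], there exist c₂, c₃ ∈ (0,1] and n₀ ∈ ℕ such that the following holds whenever n ≥ n₀. Let H be an n-vertex 3-graph satisfying δ₁(H) ≥ d·n² and let U ⊆ V(H) be a set of size |U| ≥ c₁·n. Then there exist at least c₂·n^t sets X ∈ binom(U, t) whose joint link graph L_H(X) satisfies e(L_H(X)) ≥ c₃·n². -/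
open Finset Filter

attribute [local instance] Classical.propDecidable

/-- Swap a double-counting sum: summing link sizes over `t`-sets equals summing
`t`-subset counts over pairs. -/
lemma sum_swap_aux {α β : Type*} (S : Finset α) (P : Finset β) (p : α → β → Prop) :
    ∑ X ∈ S, (P.filter fun q => p X q).card
      = ∑ q ∈ P, (S.filter fun X => p X q).card := by
  simp only [Finset.card_filter]
  exact Finset.sum_comm

lemma filter_powersetCard (U W : Finset ℕ) (t : ℕ) (hWU : W ⊆ U) :
    (U.powersetCard t).filter (fun X => X ⊆ W) = W.powersetCard t := by
  ext X
  simp only [Finset.mem_filter, Finset.mem_powersetCard]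
  exact ⟨fun h => ⟨h.2, h.1.2⟩, fun h => ⟨⟨h.1.trans hWU, h.2⟩, h.1⟩⟩

/-- In a 3-graph of large minimum 1-degree, every linearly sized
vertex subset contains many `t`-sets with dense joint link graph. -/
theorem many_tuples_with_dense_joint_link (d : ℝ) (hd : 0 < d) (t : ℕ) (ht : 0 < t)
    (c₁ : ℝ) (hc₁0 : 0 < c₁) (hc₁1 : c₁ ≤ 1) :
    ∃ c₂ c₃ : ℝ, (0 < c₂ ∧ c₂ ≤ 1) ∧ (0 < c₃ ∧ c₃ ≤ 1) ∧ ∃ n₀ : ℕ, ∀ n : ℕ, n₀ ≤ n →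
      ∀ E : Finset (Finset ℕ), (∀ e ∈ E, e ⊆ Finset.range n ∧ e.card = 3) →
        (∀ v ∈ Finset.range n, d * (n : ℝ) ^ 2 ≤ ((E.filter fun e => v ∈ e).card : ℝ)) →
        ∀ U ⊆ Finset.range n, c₁ * (n : ℝ) ≤ (U.card : ℝ) →
          c₂ * (n : ℝ) ^ t ≤
            ((((U.powersetCard t).filter fun X =>
              c₃ * (n : ℝ) ^ 2 ≤ ((jointLinkSet n E X).card : ℝ)).card : ℝ)) := by
  set ε : ℝ := min (c₁ * d / 2) 2⁻¹ with hεdef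
  have hε0 : 0 < ε := lt_min (by positivity) (by norm_num)
  have hε1 : ε ≤ 2⁻¹ := min_le_right _ _
  have h2ε : 2 * ε ≤ c₁ * d := by
    have := min_le_left (c₁ * d / 2) 2⁻¹
    have : ε ≤ c₁ * d / 2 := this
    linarith
  have ht' : (1 : ℝ) ≤ t := by exact_mod_cast ht
  set c' : ℝ := ε * (ε / (2 * t)) ^ t with hc'def
  have hfrac0 : 0 < ε / (2 * t) := by positivity
  have hfrac1 : ε / (2 * t) ≤ 1 := by
    rw [div_le_one (by positivity)]; nlinarith
  have hc'0 : 0 < c' := by positivity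
  have hc'1 : c' ≤ 1 := by
    have hp1 : (ε / (2 * t)) ^ t ≤ 1 := pow_le_one₀ (le_of_lt hfrac0) hfrac1
    nlinarith
  refine ⟨c' / 2, c' / 2, ⟨by positivity, by linarith⟩, ⟨by positivity, by linarith⟩,
    ⌈2 * (t : ℝ) / ε⌉₊ + 1, fun n hn E hE hdeg U hU hUcard => ?_⟩
  have hn1 : 1 ≤ n := le_trans (Nat.le_add_left 1 _) hn
  have hn0R : (0 : ℝ) < n := by exact_mod_cast hn1
  have hnceil : (⌈2 * (t : ℝ) / ε⌉₊ : ℝ) ≤ n := by exact_mod_cast le_trans (Nat.le_succ _) hn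
  have h2t : 2 * (t : ℝ) ≤ ε * n := by
    have := (Nat.le_ceil (2 * (t : ℝ) / ε)).trans hnceil
    rw [div_le_iff₀ hε0] at this
    linarith
  set P : Finset (Finset ℕ) := (Finset.range n).powersetCard 2 with hPdef
  have hPn : (P.card : ℝ) ≤ (n : ℝ) ^ 2 := by
    have h1 : P.card = n.choose 2 := by
      rw [hPdef, Finset.card_powersetCard, Finset.card_range]
    rw [h1]
    exact_mod_cast (Nat.choose_le_pow n 2)
  -- Step A: double counting
  have hswap : ∑ X ∈ U.powersetCard t, ((jointLinkSet n E X).card : ℝ)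
      = ∑ q ∈ P, (((U.filter fun x => insert x q ∈ E).powersetCard t).card : ℝ) := by
    have h1 : ∑ X ∈ U.powersetCard t, (jointLinkSet n E X).card
        = ∑ q ∈ P, ((U.powersetCard t).filter fun X => ∀ x ∈ X, insert x q ∈ E).card := by
      have h := sum_swap_aux (U.powersetCard t) P (fun X q => ∀ x ∈ X, insert x q ∈ E)
      convert h using 3 <;> (ext y; simp [jointLinkSet, hPdef])
    have h2 : ∀ q : Finset ℕ,
        ((U.powersetCard t).filter fun X => ∀ x ∈ X, insert x q ∈ E)
          = (U.filter fun x => insert x q ∈ E).powersetCard t := by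
      intro q
      rw [← filter_powersetCard U (U.filter fun x => insert x q ∈ E) t
        (Finset.filter_subset _ _)]
      apply Finset.filter_congr
      intro X hX
      rw [Finset.mem_powersetCard] at hX
      simp only [Finset.subset_iff, Finset.mem_filter]
      constructor
      · intro h x hx; exact ⟨hX.1 hx, h x hx⟩
      · intro h x hx; exact (h hx).2
    have hnat : ∑ X ∈ U.powersetCard t, (jointLinkSet n E X).card
        = ∑ q ∈ P, ((U.filter fun x => insert x q ∈ E).powersetCard t).card := by
      rw [h1]
      exact Finset.sum_congr rfl fun q _ => by rw [h2 q]
    exact_mod_cast hnat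
  -- Step B: degree lower bound for the total codegree sum
  have hdegq : ∀ x ∈ U,
      (E.filter fun e => x ∈ e).card ≤ (P.filter fun q => insert x q ∈ E).card := by
    intro x hx
    apply Finset.card_le_card_of_injOn (fun e => e.erase x)
    · intro e he
      simp only [Finset.mem_coe, Finset.mem_filter] at he ⊢
      obtain ⟨heE, hxe⟩ := he
      obtain ⟨hsub, hcard⟩ := hE e heE
      have hins : insert x (e.erase x) = e := Finset.insert_erase hxe
      refine ⟨?_, by rw [hins]; exact heE⟩
      rw [hPdef, Finset.mem_powersetCard]
      exact ⟨(Finset.erase_subset x e).trans hsub,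
        by rw [Finset.card_erase_of_mem hxe, hcard]⟩
    · intro e he f hf hef
      rw [Finset.mem_coe, Finset.mem_filter] at he hf
      rw [← Finset.insert_erase he.2, ← Finset.insert_erase hf.2]
      exact congrArg (insert x) hef
  have hB : 2 * ε * (n : ℝ) ^ 3
      ≤ ∑ q ∈ P, ((U.filter fun x => insert x q ∈ E).card : ℝ) := by
    have hswap2 : ∑ q ∈ P, ((U.filter fun x => insert x q ∈ E).card : ℝ)
        = ∑ x ∈ U, ((P.filter fun q => insert x q ∈ E).card : ℝ) := by
      have h := (sum_swap_aux U P (fun x q => insert x q ∈ E)).symm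
      have hnat : (∑ q ∈ P, (U.filter fun x => insert x q ∈ E).card)
          = ∑ x ∈ U, (P.filter fun q => insert x q ∈ E).card := by
        convert h using 3 <;> (ext y; simp)
      exact_mod_cast hnat
    rw [hswap2]
    have hd2 : (0 : ℝ) ≤ d * (n : ℝ) ^ 2 := by positivity
    calc 2 * ε * (n : ℝ) ^ 3 ≤ c₁ * d * (n : ℝ) ^ 3 := by nlinarith [pow_pos hn0R 3]
      _ = (c₁ * n) * (d * (n : ℝ) ^ 2) := by ring
      _ ≤ (U.card : ℝ) * (d * (n : ℝ) ^ 2) := by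
          apply mul_le_mul_of_nonneg_right hUcard hd2
      _ = ∑ _x ∈ U, (d * (n : ℝ) ^ 2) := by rw [Finset.sum_const, nsmul_eq_mul]
      _ ≤ ∑ x ∈ U, ((P.filter fun q => insert x q ∈ E).card : ℝ) := by
          apply Finset.sum_le_sum
          intro x hx
          exact le_trans (hdeg x (hU hx)) (by exact_mod_cast hdegq x hx)
  -- Step C: Markov, many pairs with large codegree
  set A : Finset (Finset ℕ) :=
    P.filter (fun q => ε * n ≤ ((U.filter fun x => insert x q ∈ E).card : ℝ)) with hAdef
  have hUn : ∀ q : Finset ℕ, ((U.filter fun x => insert x q ∈ E).card : ℝ) ≤ n := by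
    intro q
    have h1 : (U.filter fun x => insert x q ∈ E).card ≤ n := by
      calc (U.filter fun x => insert x q ∈ E).card ≤ U.card :=
            Finset.card_filter_le _ _
        _ ≤ (Finset.range n).card := Finset.card_le_card hU
        _ = n := Finset.card_range n
    exact_mod_cast h1
  have hAcard : ε * (n : ℝ) ^ 2 ≤ (A.card : ℝ) := by
    have hsplit : ∑ q ∈ P, ((U.filter fun x => insert x q ∈ E).card : ℝ)
        ≤ (A.card : ℝ) * n + (P.card : ℝ) * (ε * n) := by
      rw [← Finset.sum_filter_add_sum_filter_not P
        (fun q => ε * n ≤ ((U.filter fun x => insert x q ∈ E).card : ℝ))]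
      have h1 : ∑ q ∈ A, ((U.filter fun x => insert x q ∈ E).card : ℝ)
          ≤ (A.card : ℝ) * n := by
        rw [← nsmul_eq_mul]
        exact Finset.sum_le_card_nsmul A _ _ fun q _ => hUn q
      have h2 : ∑ q ∈ P.filter
          (fun q => ¬ ε * n ≤ ((U.filter fun x => insert x q ∈ E).card : ℝ)),
            ((U.filter fun x => insert x q ∈ E).card : ℝ)
          ≤ (P.card : ℝ) * (ε * n) := by
        calc _ ≤ ((P.filter (fun q => ¬ ε * n ≤
              ((U.filter fun x => insert x q ∈ E).card : ℝ))).card : ℝ) * (ε * n) := by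
              rw [← nsmul_eq_mul]
              exact Finset.sum_le_card_nsmul _ _ _ fun q hq =>
                le_of_lt (not_le.mp (Finset.mem_filter.mp hq).2)
          _ ≤ (P.card : ℝ) * (ε * n) := by
              apply mul_le_mul_of_nonneg_right _ (by positivity)
              exact_mod_cast Finset.card_le_card (Finset.filter_subset _ _)
      exact add_le_add h1 h2
    have hP3 : (P.card : ℝ) * (ε * n) ≤ ε * (n : ℝ) ^ 3 := by
      calc (P.card : ℝ) * (ε * n) ≤ (n : ℝ) ^ 2 * (ε * n) :=
            mul_le_mul_of_nonneg_right hPn (by positivity)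
        _ = ε * (n : ℝ) ^ 3 := by ring
    have key : ε * (n : ℝ) ^ 3 ≤ (A.card : ℝ) * n := by linarith
    have : ε * (n : ℝ) ^ 2 * n ≤ (A.card : ℝ) * n := by
      calc ε * (n : ℝ) ^ 2 * n = ε * (n : ℝ) ^ 3 := by ring
        _ ≤ (A.card : ℝ) * n := key
    exact le_of_mul_le_mul_right this hn0R
  -- Step D: each large-codegree pair lies in many t-subsets of U
  have hchoose : ∀ q ∈ A,
      ((ε / (2 * t)) * n) ^ t
        ≤ (((U.filter fun x => insert x q ∈ E).card.choose t : ℕ) : ℝ) := by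
    intro q hq
    set m : ℕ := (U.filter fun x => insert x q ∈ E).card with hmdef
    have hm : ε * n ≤ (m : ℝ) := (Finset.mem_filter.mp hq).2
    have htm : t ≤ m := by
      have : (t : ℝ) ≤ (m : ℝ) := by linarith
      exact_mod_cast this
    have hcast : ((m + 1 - t : ℕ) : ℝ) = (m : ℝ) + 1 - t := by
      rw [Nat.cast_sub (le_trans htm (Nat.le_succ m))]
      push_cast
      try ring
    have hlow : ε * n / 2 ≤ ((m + 1 - t : ℕ) : ℝ) := by
      rw [hcast]; linarith
    have hfact : ((Nat.factorial t : ℕ) : ℝ) ≤ ((t : ℝ)) ^ t := by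
      exact_mod_cast Nat.factorial_le_pow t
    have hfactpos : (0 : ℝ) < (Nat.factorial t : ℕ) := by
      exact_mod_cast Nat.factorial_pos t
    have htpos : (0 : ℝ) < (t : ℝ) := by positivity
    calc ((ε / (2 * t)) * n) ^ t = ((ε * n / 2) ^ t) / (t : ℝ) ^ t := by
          rw [← div_pow]; congr 1; field_simp; try ring
      _ ≤ ((m + 1 - t : ℕ) : ℝ) ^ t / (t : ℝ) ^ t := by
          apply div_le_div_of_nonneg_right _ (by positivity)
          exact pow_le_pow_left₀ (by positivity) hlow t
      _ ≤ ((m + 1 - t : ℕ) : ℝ) ^ t / ((Nat.factorial t : ℕ) : ℝ) := by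
          apply div_le_div_of_nonneg_left (by positivity) hfactpos hfact
      _ ≤ (m.choose t : ℝ) := by
          have := Nat.pow_le_choose (α := ℝ) t m
          push_cast at this ⊢
          exact this
  -- Step E: lower bound the total sum
  have hSum : c' * (n : ℝ) ^ (t + 2)
      ≤ ∑ X ∈ U.powersetCard t, ((jointLinkSet n E X).card : ℝ) := by
    rw [hswap]
    have hAsub : A ⊆ P := Finset.filter_subset _ _
    have h1 : ∑ q ∈ A, (((U.filter fun x => insert x q ∈ E).powersetCard t).card : ℝ)
        ≤ ∑ q ∈ P, (((U.filter fun x => insert x q ∈ E).powersetCard t).card : ℝ) :=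
      Finset.sum_le_sum_of_subset_of_nonneg hAsub fun q _ _ => by positivity
    have h2 : (A.card : ℝ) * (((ε / (2 * t)) * n) ^ t)
        ≤ ∑ q ∈ A, (((U.filter fun x => insert x q ∈ E).powersetCard t).card : ℝ) := by
      rw [← nsmul_eq_mul]
      apply Finset.card_nsmul_le_sum
      intro q hq
      rw [Finset.card_powersetCard]
      exact hchoose q hq
    have h3 : c' * (n : ℝ) ^ (t + 2) ≤ (A.card : ℝ) * (((ε / (2 * t)) * n) ^ t) := by
      have hfn : (0 : ℝ) ≤ ((ε / (2 * t)) * n) ^ t := by positivity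
      calc c' * (n : ℝ) ^ (t + 2)
          = (ε * (n : ℝ) ^ 2) * (((ε / (2 * t)) * n) ^ t) := by
            rw [hc'def, mul_pow, pow_add]; ring
        _ ≤ (A.card : ℝ) * (((ε / (2 * t)) * n) ^ t) :=
            mul_le_mul_of_nonneg_right hAcard hfn
    linarith
  -- Step F: conclude
  set G := (U.powersetCard t).filter
    (fun X => c' / 2 * (n : ℝ) ^ 2 ≤ ((jointLinkSet n E X).card : ℝ)) with hGdef
  have hjll_le : ∀ X : Finset ℕ, ((jointLinkSet n E X).card : ℝ) ≤ (n : ℝ) ^ 2 := by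
    intro X
    refine le_trans ?_ hPn
    exact_mod_cast Finset.card_le_card (Finset.filter_subset _ _)
  have hScard : ((U.powersetCard t).card : ℝ) ≤ (n : ℝ) ^ t := by
    rw [Finset.card_powersetCard]
    have h1 : U.card.choose t ≤ n ^ t := by
      calc U.card.choose t ≤ U.card ^ t := Nat.choose_le_pow U.card t
        _ ≤ n ^ t := Nat.pow_le_pow_left
            (by simpa using Finset.card_le_card hU) t
    exact_mod_cast h1
  have hupper : ∑ X ∈ U.powersetCard t, ((jointLinkSet n E X).card : ℝ)
      ≤ (G.card : ℝ) * (n : ℝ) ^ 2 + (n : ℝ) ^ t * (c' / 2 * (n : ℝ) ^ 2) := by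
    rw [← Finset.sum_filter_add_sum_filter_not (U.powersetCard t)
      (fun X => c' / 2 * (n : ℝ) ^ 2 ≤ ((jointLinkSet n E X).card : ℝ))]
    have h1 : ∑ X ∈ G, ((jointLinkSet n E X).card : ℝ) ≤ (G.card : ℝ) * (n : ℝ) ^ 2 := by
      rw [← nsmul_eq_mul]
      exact Finset.sum_le_card_nsmul _ _ _ fun X _ => hjll_le X
    have h2 : ∑ X ∈ (U.powersetCard t).filter
        (fun X => ¬ c' / 2 * (n : ℝ) ^ 2 ≤ ((jointLinkSet n E X).card : ℝ)),
          ((jointLinkSet n E X).card : ℝ)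
        ≤ (n : ℝ) ^ t * (c' / 2 * (n : ℝ) ^ 2) := by
      calc _ ≤ (((U.powersetCard t).filter
            (fun X => ¬ c' / 2 * (n : ℝ) ^ 2 ≤ ((jointLinkSet n E X).card : ℝ))).card : ℝ)
              * (c' / 2 * (n : ℝ) ^ 2) := by
            rw [← nsmul_eq_mul]
            exact Finset.sum_le_card_nsmul _ _ _ fun X hX =>
              le_of_lt (not_le.mp (Finset.mem_filter.mp hX).2)
        _ ≤ (n : ℝ) ^ t * (c' / 2 * (n : ℝ) ^ 2) := by
            apply mul_le_mul_of_nonneg_right _ (by positivity)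
            exact le_trans
              (by exact_mod_cast Finset.card_le_card (Finset.filter_subset _ _)) hScard
    exact add_le_add h1 h2
  have hkey : c' / 2 * (n : ℝ) ^ (t + 2) ≤ (G.card : ℝ) * (n : ℝ) ^ 2 := by
    have h4 : (n : ℝ) ^ t * (c' / 2 * (n : ℝ) ^ 2) = c' / 2 * (n : ℝ) ^ (t + 2) := by
      rw [pow_add]; ring
    linarith [hSum.trans hupper]
  have hfin : c' / 2 * (n : ℝ) ^ t * (n : ℝ) ^ 2 ≤ (G.card : ℝ) * (n : ℝ) ^ 2 := by
    calc c' / 2 * (n : ℝ) ^ t * (n : ℝ) ^ 2 = c' / 2 * (n : ℝ) ^ (t + 2) := by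
          rw [pow_add]; ring
      _ ≤ (G.card : ℝ) * (n : ℝ) ^ 2 := hkey
  exact le_of_mul_le_mul_right hfin (by positivity)
end

section
/- (Dependent random choice for 3-graphs.) Let a, m, n, r be positive integers and let H be an n-vertex 3-graph. If there exists a positive integer t such that n^{1−2t}·δ₁(H)^t − C(n,r)·(2m/(n(n−1)))^t ≥ a, then there exists a subset U ⊆ V(H) of size |U| ≥ a having the property that e(L_H(S)) ≥ m for every S ∈ binom(U, r). -/
/-! Choose a tuple `p` of `t` pairs of `[n]`, uniformly among the `C(n,2)^t` such tuples, and let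
`U₀` be the set of vertices whose link contains every pair of `p`. Double counting gives
`𝔼|U₀| = ∑ₓ (deg x / C(n,2))^t ≥ n δ₁^t / C(n,2)^t ≥ n^{1-2t} δ₁^t`, while the expected number of
`r`-sets `S ⊆ U₀` with `e(L(S)) < m` is `∑_S (e(L(S)) / C(n,2))^t ≤ C(n,r) (2m / (n(n-1)))^t`.
Hence for some `p` the set `U₀` exceeds its number of such bad `r`-sets by at least `a`, and
deleting one vertex from each bad `r`-set leaves the required `U`. -/

open Finset Filter

attribute [local instance] Classical.propDecidable

theorem sum_piFinset_card_filter_forall_mem {α β : Type*} (t : ℕ) (P : Finset β)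
    (X : Finset α) (A : α → Finset β) [∀ p : Fin t → β, DecidablePred fun x => ∀ i, p i ∈ A x]
    (hA : ∀ x ∈ X, A x ⊆ P) :
    ∑ p ∈ Fintype.piFinset (fun _ : Fin t => P), #{x ∈ X | ∀ i, p i ∈ A x} =
      ∑ x ∈ X, #(A x) ^ t := by
  simp_rw [card_filter]
  rw [sum_comm]
  refine sum_congr rfl fun x hx => ?_
  rw [← card_filter]
  have hfilter : {p ∈ Fintype.piFinset (fun _ : Fin t => P) | ∀ i, p i ∈ A x} =
      Fintype.piFinset fun _ => A x := by
    ext p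
    simp only [mem_filter, Fintype.mem_piFinset]
    exact ⟨fun h => h.2, fun h => ⟨fun i => hA x hx (h i), h⟩⟩
  simp [hfilter, Fintype.card_piFinset]

theorem exists_subset_card_le_add_forall_not_subset {α : Type*} (U₀ : Finset α)
    (B : Finset (Finset α)) (hB : ∀ S ∈ B, S.Nonempty) :
    ∃ U ⊆ U₀, #U₀ ≤ #U + #B ∧ ∀ S ∈ B, ¬S ⊆ U := by
  set D := B.attach.image fun S => (hB S.1 S.2).choose
  refine ⟨U₀ \ D, sdiff_subset, ?_, fun S hS hSU => ?_⟩
  · calc #U₀ ≤ #(U₀ \ D) + #D := card_le_card_sdiff_add_card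
      _ ≤ #(U₀ \ D) + #B := by
        gcongr
        exact card_image_le.trans_eq card_attach
  · have hchoose : (hB S hS).choose ∈ D := mem_image.2 ⟨⟨S, hS⟩, mem_attach _ _, rfl⟩
    exact (mem_sdiff.1 (hSU (hB S hS).choose_spec)).2 hchoose

section JointLink

variable {n : ℕ} {E : Finset (Finset ℕ)}

theorem card_filter_mem_eq_card_jointLinkSet_singleton
    (hE : ∀ e ∈ E, e ⊆ range n ∧ e.card = 3) (x : ℕ) :
    #{e ∈ E | x ∈ e} = #(jointLinkSet n E {x}) := by
  refine card_bij' (fun e _ => e.erase x) (fun q _ => insert x q) ?_ ?_ ?_ ?_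
  · intro e he
    obtain ⟨heE, hxe⟩ := mem_filter.1 he
    obtain ⟨hsub, hcard⟩ := hE e heE
    simp only [jointLinkSet, mem_filter, mem_powersetCard, mem_singleton, forall_eq,
      insert_erase hxe]
    exact ⟨⟨(erase_subset x e).trans hsub, by rw [card_erase_of_mem hxe, hcard]⟩, heE⟩
  · intro q hq
    simp only [jointLinkSet, mem_filter, mem_singleton, forall_eq] at hq
    exact mem_filter.2 ⟨hq.2, mem_insert_self x q⟩
  · intro e he
    exact insert_erase (mem_filter.1 he).2
  · intro q hq
    simp only [jointLinkSet, mem_filter, mem_powersetCard, mem_singleton, forall_eq] at hq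
    refine erase_insert fun hxq => ?_
    have := (hE _ hq.2).2
    rw [insert_eq_of_mem hxq, hq.1.2] at this
    omega

theorem minDeg1_le_card_filter_mem {x : ℕ} (hx : x ∈ range n) :
    minDeg1 n E ≤ #{e ∈ E | x ∈ e} := by
  have hne : ((range n).image fun v => #{e ∈ E | v ∈ e}).Nonempty :=
    ⟨_, mem_image_of_mem _ hx⟩
  rw [minDeg1, dif_pos hne]
  exact min'_le _ _ (mem_image_of_mem _ hx)

theorem minDeg1_le_card_jointLinkSet_singleton (hE : ∀ e ∈ E, e ⊆ range n ∧ e.card = 3)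
    {x : ℕ} (hx : x ∈ range n) : minDeg1 n E ≤ #(jointLinkSet n E {x}) :=
  (minDeg1_le_card_filter_mem hx).trans_eq (card_filter_mem_eq_card_jointLinkSet_singleton hE x)

theorem card_jointLinkSet_le_choose_two (S : Finset ℕ) : #(jointLinkSet n E S) ≤ n.choose 2 :=
  (card_le_card (filter_subset _ _)).trans_eq (by simp)

theorem minDeg1_le_choose_two (hE : ∀ e ∈ E, e ⊆ range n ∧ e.card = 3) :
    minDeg1 n E ≤ n.choose 2 := by
  rcases Nat.eq_zero_or_pos n with rfl | hn
  · simp [minDeg1]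
  · exact (minDeg1_le_card_jointLinkSet_singleton hE (mem_range.2 hn)).trans
      (card_jointLinkSet_le_choose_two _)

theorem mem_jointLinkSet_of_forall_mem_singleton {q : Finset ℕ} {S : Finset ℕ}
    (hq : q ∈ (range n).powersetCard 2) (h : ∀ x ∈ S, q ∈ jointLinkSet n E {x}) :
    q ∈ jointLinkSet n E S :=
  mem_filter.2 ⟨hq, fun x hx => (mem_filter.1 (h x hx)).2 x (mem_singleton_self x)⟩

end JointLink

section DependentRandomChoice

variable {n : ℕ} {E : Finset (Finset ℕ)} {a m r t : ℕ}

theorem exists_pairs_card_add_le (hn : 2 ≤ n) (hE : ∀ e ∈ E, e ⊆ range n ∧ e.card = 3)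
    (hcount : a * n.choose 2 ^ t + n.choose r * m ^ t ≤ n * minDeg1 n E ^ t) :
    ∃ p ∈ Fintype.piFinset (fun _ : Fin t => (range n).powersetCard 2),
      a + #{S ∈ (range n).powersetCard r | #(jointLinkSet n E S) < m ∧
          ∀ i, p i ∈ jointLinkSet n E S} ≤
        #{x ∈ range n | ∀ i, p i ∈ jointLinkSet n E {x}} := by
  set P := (range n).powersetCard 2
  set Small := {S ∈ (range n).powersetCard r | #(jointLinkSet n E S) < m}
  have hlink : ∀ S, jointLinkSet n E S ⊆ P := fun S => filter_subset _ _
  have hPne : P.Nonempty := powersetCard_nonempty.2 (by simpa using hn)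
  have hsmall : ∑ S ∈ Small, #(jointLinkSet n E S) ^ t ≤ n.choose r * m ^ t :=
    calc ∑ S ∈ Small, #(jointLinkSet n E S) ^ t ≤ ∑ _S ∈ Small, m ^ t :=
          sum_le_sum fun S hS => Nat.pow_le_pow_left (mem_filter.1 hS).2.le t
      _ ≤ n.choose r * m ^ t := by
          rw [sum_const, smul_eq_mul]
          gcongr
          exact (card_filter_le _ _).trans_eq (by simp)
  have hdeg : n * minDeg1 n E ^ t ≤ ∑ x ∈ range n, #(jointLinkSet n E {x}) ^ t :=
    calc n * minDeg1 n E ^ t = ∑ _x ∈ range n, minDeg1 n E ^ t := by simp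
      _ ≤ _ := sum_le_sum fun x hx =>
          Nat.pow_le_pow_left (minDeg1_le_card_jointLinkSet_singleton hE hx) t
  refine exists_le_of_sum_le (Fintype.piFinset_nonempty.2 fun _ => hPne) ?_
  have hbad : ∀ p : Fin t → Finset ℕ,
      {S ∈ (range n).powersetCard r | #(jointLinkSet n E S) < m ∧
        ∀ i, p i ∈ jointLinkSet n E S} = {S ∈ Small | ∀ i, p i ∈ jointLinkSet n E S} :=
    fun p => by rw [filter_filter]
  simp only [hbad]
  rw [sum_add_distrib, sum_const, smul_eq_mul, Fintype.card_piFinset_const,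
    sum_piFinset_card_filter_forall_mem t P Small (jointLinkSet n E) fun S _ => hlink S,
    sum_piFinset_card_filter_forall_mem t P (range n) (fun x => jointLinkSet n E {x})
      fun x _ => hlink {x}]
  calc #P ^ t * a + ∑ S ∈ Small, #(jointLinkSet n E S) ^ t
      ≤ a * n.choose 2 ^ t + n.choose r * m ^ t := by
        rw [mul_comm, card_powersetCard, card_range]
        exact Nat.add_le_add_left hsmall _
    _ ≤ _ := hcount.trans hdeg

theorem exists_subset_forall_le_card_jointLinkSet (hn : 2 ≤ n) (hr : 0 < r)
    (hE : ∀ e ∈ E, e ⊆ range n ∧ e.card = 3)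
    (hcount : a * n.choose 2 ^ t + n.choose r * m ^ t ≤ n * minDeg1 n E ^ t) :
    ∃ U ⊆ range n, a ≤ #U ∧ ∀ S ∈ U.powersetCard r, m ≤ #(jointLinkSet n E S) := by
  obtain ⟨p, hp, hcard⟩ := exists_pairs_card_add_le hn hE hcount
  set U₀ := {x ∈ range n | ∀ i, p i ∈ jointLinkSet n E {x}}
  set Bad := {S ∈ (range n).powersetCard r | #(jointLinkSet n E S) < m ∧
    ∀ i, p i ∈ jointLinkSet n E S}
  have hBad : ∀ S ∈ Bad, S.Nonempty := fun S hS =>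
    card_pos.1 ((mem_powersetCard.1 (mem_filter.1 hS).1).2 ▸ hr)
  obtain ⟨U, hUU₀, hcardU, hUBad⟩ := exists_subset_card_le_add_forall_not_subset U₀ Bad hBad
  have hU : U ⊆ range n := hUU₀.trans (filter_subset _ _)
  refine ⟨U, hU, by omega, fun S hS => ?_⟩
  obtain ⟨hSU, hScard⟩ := mem_powersetCard.1 hS
  by_contra! hsmall
  have hpS : ∀ i, p i ∈ jointLinkSet n E S := fun i =>
    mem_jointLinkSet_of_forall_mem_singleton (Fintype.mem_piFinset.1 hp i)
      fun x hx => (mem_filter.1 (hUU₀ (hSU hx))).2 i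
  exact hUBad S (mem_filter.2 ⟨mem_powersetCard.2 ⟨hSU.trans hU, hScard⟩, hsmall, hpS⟩) hSU

end DependentRandomChoice

theorem two_mul_div_mul_sub_one_eq_div_choose_two (m n : ℕ) :
    2 * (m : ℝ) / (n * (n - 1)) = m / n.choose 2 := by
  rw [Nat.cast_choose_two, div_div_eq_mul_div]
  ring

theorem rpow_one_sub_two_mul_mul_choose_two_pow_le (n t : ℕ) :
    (n : ℝ) ^ (1 - 2 * (t : ℝ)) * (n.choose 2 : ℝ) ^ t ≤ n := by
  rcases Nat.eq_zero_or_pos n with rfl | hn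
  · rcases Nat.eq_zero_or_pos t with rfl | ht
    · simp
    · simp [ht.ne']
  have hn' : (0 : ℝ) < n := by exact_mod_cast hn
  have hchoose : (n.choose 2 : ℝ) ≤ (n : ℝ) ^ 2 := by
    rw [Nat.cast_choose_two]
    nlinarith
  calc (n : ℝ) ^ (1 - 2 * (t : ℝ)) * (n.choose 2 : ℝ) ^ t
      ≤ (n : ℝ) ^ (1 - 2 * (t : ℝ)) * ((n : ℝ) ^ 2) ^ t := by gcongr
    _ = n := by
      rw [← pow_mul, ← Real.rpow_natCast, ← Real.rpow_add hn']
      norm_num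

theorem mul_choose_two_pow_add_le_of_le_rpow_sub {n a m c δ t : ℕ} (hn : 2 ≤ n)
    (h : (a : ℝ) ≤ (n : ℝ) ^ ((1 : ℝ) - 2 * (t : ℝ)) * (δ : ℝ) ^ t
      - (c : ℝ) * (2 * (m : ℝ) / ((n : ℝ) * ((n : ℝ) - 1))) ^ t) :
    a * n.choose 2 ^ t + c * m ^ t ≤ n * δ ^ t := by
  have hN : (0 : ℝ) < n.choose 2 := by exact_mod_cast Nat.choose_pos hn
  rw [two_mul_div_mul_sub_one_eq_div_choose_two, div_pow] at h
  have hscaled := mul_le_mul_of_nonneg_right h (pow_pos hN t).le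
  rw [sub_mul, mul_assoc (c : ℝ), div_mul_cancel₀ _ (pow_pos hN t).ne'] at hscaled
  have hdeg : (n : ℝ) ^ ((1 : ℝ) - 2 * (t : ℝ)) * (δ : ℝ) ^ t * (n.choose 2 : ℝ) ^ t ≤
      n * δ ^ t := by
    rw [mul_right_comm]
    gcongr
    exact rpow_one_sub_two_mul_mul_choose_two_pow_le n t
  exact_mod_cast (show (a : ℝ) * (n.choose 2 : ℝ) ^ t + c * m ^ t ≤ n * δ ^ t by linarith)

theorem dependent_random_choice_general (a m n r : ℕ)
    (hr : 0 < r) (E : Finset (Finset ℕ))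
    (hE : ∀ e ∈ E, e ⊆ Finset.range n ∧ e.card = 3)
    (ht : ∃ t : ℕ, 0 < t ∧
      (a : ℝ) ≤ (n : ℝ) ^ ((1 : ℝ) - 2 * (t : ℝ)) * (minDeg1 n E : ℝ) ^ t
        - (n.choose r : ℝ) * (2 * (m : ℝ) / ((n : ℝ) * ((n : ℝ) - 1))) ^ t) :
    ∃ U ⊆ Finset.range n, a ≤ U.card ∧
      ∀ S ∈ U.powersetCard r, m ≤ (jointLinkSet n E S).card := by
  obtain ⟨t, ht, hbound⟩ := ht
  rcases lt_or_ge n 2 with hn | hn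
  · have hδ : minDeg1 n E = 0 :=
      Nat.eq_zero_of_le_zero ((minDeg1_le_choose_two hE).trans_eq (Nat.choose_eq_zero_of_lt hn))
    have hdenom : (n : ℝ) * ((n : ℝ) - 1) = 0 := by interval_cases n <;> simp
    have ha : a = 0 := by
      simp only [hδ, hdenom, Nat.cast_zero, zero_pow ht.ne', mul_zero, div_zero, sub_zero] at hbound
      exact_mod_cast hbound.antisymm (Nat.cast_nonneg a)
    exact ⟨∅, empty_subset _, by simp [ha], by simp [hr.ne]⟩
  · exact exists_subset_forall_le_card_jointLinkSet hn hr hE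
      (mul_choose_two_pow_add_le_of_le_rpow_sub hn hbound)

/-- (Dependent random choice for 3-graphs.) -/
theorem dependent_random_choice (a m n r : ℕ) (ha : 0 < a) (hm : 0 < m) (hn : 0 < n)
    (hr : 0 < r) (E : Finset (Finset ℕ))
    (hE : ∀ e ∈ E, e ⊆ Finset.range n ∧ e.card = 3)
    (ht : ∃ t : ℕ, 0 < t ∧
      (a : ℝ) ≤ (n : ℝ) ^ ((1 : ℝ) - 2 * (t : ℝ)) * (minDeg1 n E : ℝ) ^ t
        - (n.choose r : ℝ) * (2 * (m : ℝ) / ((n : ℝ) * ((n : ℝ) - 1))) ^ t) :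
    ∃ U ⊆ Finset.range n, a ≤ U.card ∧
      ∀ S ∈ U.powersetCard r, m ≤ (jointLinkSet n E S).card :=
  dependent_random_choice_general a m n r hr E hE ht
end

section
/- For every α > 0, ρ > 0, and positive integer r, there exist n₀ ∈ ℕ and β > 0 such that the following holds whenever n ≥ n₀. Let H be an n-vertex 3-graph satisfying δ₁(H) ≥ α·n². Then there exists a subset U ⊆ V(H) of size |U| ≥ β·n such that every S ∈ binom(U, r) satisfies e(L_H(S)) ≥ n^{2−ρ}. -/
open Finset Filter

attribute [local instance] Classical.propDecidable

lemma piCount {t : ℕ} {P A : Finset (Finset ℕ)} (hA : A ⊆ P) :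
    ((Fintype.piFinset fun _ : Fin t => P).filter fun p => ∀ i, p i ∈ A).card
      = A.card ^ t := by
  have h : ((Fintype.piFinset fun _ : Fin t => P).filter fun p => ∀ i, p i ∈ A)
      = Fintype.piFinset fun _ : Fin t => A := by
    ext p
    simp only [mem_filter, Fintype.mem_piFinset]
    exact ⟨fun h => h.2, fun h => ⟨fun i => hA (h i), h⟩⟩
  rw [h, Fintype.card_piFinset_const]

set_option maxHeartbeats 1000000 in
/-- A consequence of dependent random choice for dense 3-graphs. -/
theorem drc_dense (α ρ : ℝ) (hα : 0 < α) (hρ : 0 < ρ) (r : ℕ) (hr : 0 < r) :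
    ∃ n₀ : ℕ, ∃ β : ℝ, 0 < β ∧ ∀ n : ℕ, n₀ ≤ n →
      ∀ E : Finset (Finset ℕ), (∀ e ∈ E, e ⊆ Finset.range n ∧ e.card = 3) →
        (∀ v ∈ Finset.range n, α * (n : ℝ) ^ 2 ≤ ((E.filter fun e => v ∈ e).card : ℝ)) →
        ∃ U ⊆ Finset.range n, β * (n : ℝ) ≤ (U.card : ℝ) ∧
          ∀ S ∈ U.powersetCard r,
            (n : ℝ) ^ ((2 : ℝ) - ρ) ≤ ((jointLinkSet n E S).card : ℝ) := by
  classical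
  set t : ℕ := max 1 ⌈(r : ℝ) / ρ⌉₊ with ht
  have ht1 : 1 ≤ t := le_max_left _ _
  have hrt : (r : ℝ) ≤ ρ * t := by
    have h1 : (r : ℝ) / ρ ≤ (⌈(r : ℝ) / ρ⌉₊ : ℝ) := Nat.le_ceil _
    have h2 : ((⌈(r : ℝ) / ρ⌉₊ : ℕ) : ℝ) ≤ (t : ℝ) := by
      exact_mod_cast le_max_right 1 ⌈(r : ℝ) / ρ⌉₊
    rw [div_le_iff₀ hρ] at h1
    nlinarith
  refine ⟨max 2 (⌈(4 / α) ^ t⌉₊ + 1), α ^ t, by positivity, ?_⟩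
  intro n hn E hE hdeg
  have hn2 : 2 ≤ n := le_trans (le_max_left _ _) hn
  have hn0 : (0 : ℝ) < n := by exact_mod_cast lt_of_lt_of_le (by norm_num) hn2
  have hn1 : (1 : ℝ) ≤ n := by exact_mod_cast le_trans (by norm_num) hn2
  have hn4 : (4 / α) ^ t < (n : ℝ) := by
    have h1 : (4 / α) ^ t ≤ (⌈(4 / α) ^ t⌉₊ : ℝ) := Nat.le_ceil _
    have h2 : (⌈(4 / α) ^ t⌉₊ : ℝ) + 1 ≤ (n : ℝ) := by
      exact_mod_cast le_trans (le_max_right 2 _) hn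
    linarith
  set P2 := (Finset.range n).powersetCard 2 with hP2
  have hNcard : (P2.card : ℝ) = n * ((n : ℝ) - 1) / 2 := by
    rw [hP2, Finset.card_powersetCard, Finset.card_range]
    exact Nat.cast_choose_two (K := ℝ) n
  have hn2r : (2 : ℝ) ≤ (n : ℝ) := by exact_mod_cast hn2
  have hNpos : (0 : ℝ) < (P2.card : ℝ) := by rw [hNcard]; nlinarith
  have hNle : (P2.card : ℝ) ≤ (n : ℝ) ^ 2 / 2 := by rw [hNcard]; nlinarith
  have hNge : (n : ℝ) ^ 2 / 4 ≤ (P2.card : ℝ) := by rw [hNcard]; nlinarith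
  set L : ℕ → Finset (Finset ℕ) := fun v => P2.filter fun q => insert v q ∈ E with hLdef
  set s := Fintype.piFinset fun _ : Fin t => P2 with hsdef
  set X : (Fin t → Finset ℕ) → Finset ℕ :=
    fun p => (Finset.range n).filter fun v => ∀ i, p i ∈ L v with hXdef
  set Bad := ((Finset.range n).powersetCard r).filter
    fun S => ((jointLinkSet n E S).card : ℝ) < (n : ℝ) ^ ((2 : ℝ) - ρ) with hBaddef
  -- link graphs are big
  have hL : ∀ v ∈ Finset.range n, α * (n : ℝ) ^ 2 ≤ ((L v).card : ℝ) := by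
    intro v hv
    refine le_trans (hdeg v hv) ?_
    have hcard : (E.filter fun e => v ∈ e).card ≤ (L v).card := by
      apply Finset.card_le_card_of_injOn (fun e => e.erase v)
      · intro e he
        simp only [Finset.mem_coe, Finset.mem_filter] at he ⊢
        obtain ⟨hsub, h3⟩ := hE e he.1
        simp only [hLdef, Finset.mem_filter, hP2, Finset.mem_powersetCard]
        refine ⟨⟨(Finset.erase_subset _ _).trans hsub, ?_⟩, ?_⟩
        · rw [Finset.card_erase_of_mem he.2, h3]
        · rw [Finset.insert_erase he.2]; exact he.1
      · intro e he e' he' h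
        simp only [Finset.coe_filter, Set.mem_setOf_eq] at he he'
        have h2 : e.erase v = e'.erase v := h
        rw [← Finset.insert_erase he.2, h2, Finset.insert_erase he'.2]
    exact_mod_cast hcard
  -- first double counting
  have key1 : ∑ p ∈ s, (X p).card = ∑ v ∈ Finset.range n, (L v).card ^ t := by
    have h1 : ∀ p, (X p).card
        = ∑ v ∈ Finset.range n, if (∀ i, p i ∈ L v) then 1 else 0 := by
      intro p; rw [hXdef]; exact Finset.card_filter _ _
    calc ∑ p ∈ s, (X p).card
        = ∑ p ∈ s, ∑ v ∈ Finset.range n, if (∀ i, p i ∈ L v) then 1 else 0 := by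
          exact Finset.sum_congr rfl fun p _ => h1 p
      _ = ∑ v ∈ Finset.range n, ∑ p ∈ s, if (∀ i, p i ∈ L v) then 1 else 0 :=
          Finset.sum_comm
      _ = ∑ v ∈ Finset.range n, (s.filter fun p => ∀ i, p i ∈ L v).card := by
          exact Finset.sum_congr rfl fun v _ => (Finset.card_filter _ _).symm
      _ = ∑ v ∈ Finset.range n, (L v).card ^ t := by
          refine Finset.sum_congr rfl fun v _ => ?_
          exact piCount (Finset.filter_subset _ _)
  -- membership characterisation
  have hXiff : ∀ p ∈ s, ∀ S ∈ Bad, (S ⊆ X p ↔ ∀ i, p i ∈ jointLinkSet n E S) := by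
    intro p hp S hS
    rw [hsdef, Fintype.mem_piFinset] at hp
    have hSsub : S ⊆ Finset.range n :=
      (Finset.mem_powersetCard.mp (Finset.mem_filter.mp hS).1).1
    constructor
    · intro h i
      simp only [jointLinkSet, Finset.mem_filter, ← hP2]
      refine ⟨hp i, fun x hx => ?_⟩
      have := h hx
      simp only [hXdef, Finset.mem_filter, hLdef] at this
      exact (this.2 i).2
    · intro h v hv
      simp only [hXdef, Finset.mem_filter, hLdef]
      refine ⟨hSsub hv, fun i => ⟨hp i, ?_⟩⟩
      have := h i
      simp only [jointLinkSet, Finset.mem_filter] at this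
      exact this.2 v hv
  -- jointLinkSet lives inside P2
  have hjsub : ∀ S, jointLinkSet n E S ⊆ P2 := by
    intro S q hq
    simp only [jointLinkSet, Finset.mem_filter] at hq
    exact hq.1
  -- second double counting
  have key2 : ∑ p ∈ s, (Bad.filter fun S => S ⊆ X p).card
      = ∑ S ∈ Bad, (jointLinkSet n E S).card ^ t := by
    calc ∑ p ∈ s, (Bad.filter fun S => S ⊆ X p).card
        = ∑ p ∈ s, ∑ S ∈ Bad, if S ⊆ X p then 1 else 0 := by
          exact Finset.sum_congr rfl fun p _ => Finset.card_filter _ _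
      _ = ∑ S ∈ Bad, ∑ p ∈ s, if S ⊆ X p then 1 else 0 := Finset.sum_comm
      _ = ∑ S ∈ Bad, (jointLinkSet n E S).card ^ t := by
          refine Finset.sum_congr rfl fun S hS => ?_
          have : ∑ p ∈ s, (if S ⊆ X p then 1 else 0)
              = (s.filter fun p => ∀ i, p i ∈ jointLinkSet n E S).card := by
            rw [Finset.card_filter]
            refine Finset.sum_congr rfl fun p hp => ?_
            by_cases h : S ⊆ X p
            · rw [if_pos h, if_pos ((hXiff p hp S hS).mp h)]
            · rw [if_neg h, if_neg fun hh => h ((hXiff p hp S hS).mpr hh)]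
          rw [this]
          exact piCount (hjsub S)
  -- real bounds
  set A : ℝ := (n : ℝ) * (α * (n : ℝ) ^ 2) ^ t with hA
  set B : ℝ := (n : ℝ) ^ r * ((n : ℝ) ^ ((2 : ℝ) - ρ)) ^ t with hB
  have hrnn : (0 : ℝ) ≤ (n : ℝ) ^ ((2 : ℝ) - ρ) := Real.rpow_nonneg (le_of_lt hn0) _
  have hsum : A - B ≤ ∑ p ∈ s, (((X p).card : ℝ) - ((Bad.filter fun S => S ⊆ X p).card : ℝ)) := by
    rw [Finset.sum_sub_distrib]
    have h1 : A ≤ ∑ p ∈ s, ((X p).card : ℝ) := by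
      have e1 : ∑ p ∈ s, ((X p).card : ℝ) = ∑ v ∈ Finset.range n, ((L v).card : ℝ) ^ t := by
        push_cast [← Nat.cast_sum]
        exact_mod_cast congrArg (Nat.cast : ℕ → ℝ) key1
      rw [e1, hA]
      have : ∀ v ∈ Finset.range n, (α * (n : ℝ) ^ 2) ^ t ≤ ((L v).card : ℝ) ^ t := by
        intro v hv
        exact pow_le_pow_left₀ (by positivity) (hL v hv) t
      calc (n : ℝ) * (α * (n : ℝ) ^ 2) ^ t
          = ∑ _v ∈ Finset.range n, (α * (n : ℝ) ^ 2) ^ t := by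
            rw [Finset.sum_const, Finset.card_range, nsmul_eq_mul]
        _ ≤ ∑ v ∈ Finset.range n, ((L v).card : ℝ) ^ t := Finset.sum_le_sum this
    have h2 : ∑ p ∈ s, ((Bad.filter fun S => S ⊆ X p).card : ℝ) ≤ B := by
      have e2 : ∑ p ∈ s, ((Bad.filter fun S => S ⊆ X p).card : ℝ)
          = ∑ S ∈ Bad, ((jointLinkSet n E S).card : ℝ) ^ t := by
        push_cast [← Nat.cast_sum]
        exact_mod_cast congrArg (Nat.cast : ℕ → ℝ) key2
      rw [e2, hB]
      have hterm : ∀ S ∈ Bad, ((jointLinkSet n E S).card : ℝ) ^ t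
          ≤ ((n : ℝ) ^ ((2 : ℝ) - ρ)) ^ t := by
        intro S hS
        have := (Finset.mem_filter.mp hS).2
        exact pow_le_pow_left₀ (Nat.cast_nonneg _) (le_of_lt this) t
      have hBadcard : (Bad.card : ℝ) ≤ (n : ℝ) ^ r := by
        have h1 : Bad.card ≤ ((Finset.range n).powersetCard r).card :=
          Finset.card_le_card (Finset.filter_subset _ _)
        have h2 : ((Finset.range n).powersetCard r).card = n.choose r := by
          rw [Finset.card_powersetCard, Finset.card_range]
        have h3 : n.choose r ≤ n ^ r := Nat.choose_le_pow n r
        calc (Bad.card : ℝ) ≤ ((n ^ r : ℕ) : ℝ) := by exact_mod_cast h1.trans (h2 ▸ h3)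
          _ = (n : ℝ) ^ r := by push_cast; ring
      calc ∑ S ∈ Bad, ((jointLinkSet n E S).card : ℝ) ^ t
          ≤ ∑ _S ∈ Bad, ((n : ℝ) ^ ((2 : ℝ) - ρ)) ^ t := Finset.sum_le_sum hterm
        _ = (Bad.card : ℝ) * ((n : ℝ) ^ ((2 : ℝ) - ρ)) ^ t := by
            rw [Finset.sum_const, nsmul_eq_mul]
        _ ≤ (n : ℝ) ^ r * ((n : ℝ) ^ ((2 : ℝ) - ρ)) ^ t := by
            exact mul_le_mul_of_nonneg_right hBadcard (by positivity)
    linarith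
  -- averaging
  have hsNe : s.Nonempty := by
    refine ⟨fun _ => ({0, 1} : Finset ℕ), ?_⟩
    rw [hsdef, Fintype.mem_piFinset]
    intro i
    rw [hP2, Finset.mem_powersetCard]
    constructor
    · intro x hx
      simp only [Finset.mem_insert, Finset.mem_singleton] at hx
      rcases hx with h | h <;> simp [h, Finset.mem_range] <;> omega
    · rw [Finset.card_insert_of_notMem (by simp), Finset.card_singleton]
  have hscard : (s.card : ℝ) = (P2.card : ℝ) ^ t := by
    rw [hsdef, Fintype.card_piFinset_const]; push_cast; ring
  have hNtpos : (0 : ℝ) < (P2.card : ℝ) ^ t := by positivity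
  obtain ⟨p, hps, hp⟩ := Finset.exists_le_of_sum_le hsNe
    (show ∑ _p ∈ s, (A - B) / (P2.card : ℝ) ^ t
        ≤ ∑ p ∈ s, (((X p).card : ℝ) - ((Bad.filter fun S => S ⊆ X p).card : ℝ)) by
      rw [Finset.sum_const, nsmul_eq_mul, hscard]
      rw [mul_div_cancel₀ _ (ne_of_gt hNtpos)]
      exact hsum)
  -- final arithmetic : (A - B)/N^t ≥ α^t * n
  have harr : α ^ t * (n : ℝ) ≤ (A - B) / (P2.card : ℝ) ^ t := by
    rw [le_div_iff₀ hNtpos]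
    have hAlow : (n : ℝ) * α ^ t * (2 ^ t * (P2.card : ℝ) ^ t) ≤ A := by
      rw [hA, mul_pow]
      have h2N : 2 * (P2.card : ℝ) ≤ (n : ℝ) ^ 2 := by linarith
      have : (2 * (P2.card : ℝ)) ^ t ≤ ((n : ℝ) ^ 2) ^ t :=
        pow_le_pow_left₀ (by positivity) h2N t
      rw [mul_pow] at this
      have hmul := mul_le_mul_of_nonneg_left this
        (show (0 : ℝ) ≤ (n : ℝ) * α ^ t by positivity)
      calc (n : ℝ) * α ^ t * (2 ^ t * (P2.card : ℝ) ^ t)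
          = (n : ℝ) * α ^ t * (2 ^ t * (P2.card : ℝ) ^ t) := rfl
        _ ≤ (n : ℝ) * α ^ t * ((n : ℝ) ^ 2) ^ t := hmul
        _ = (n : ℝ) * (α ^ t * ((n : ℝ) ^ 2) ^ t) := by ring
    have hBhigh : B ≤ 4 ^ t * (P2.card : ℝ) ^ t := by
      have e1 : B = (n : ℝ) ^ ((r : ℝ) + ((2 : ℝ) - ρ) * t) := by
        rw [hB, ← Real.rpow_natCast (n : ℝ) r,
          ← Real.rpow_natCast ((n : ℝ) ^ ((2 : ℝ) - ρ)) t,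
          ← Real.rpow_mul (le_of_lt hn0), ← Real.rpow_add hn0]
      have e2 : (n : ℝ) ^ ((r : ℝ) + ((2 : ℝ) - ρ) * t) ≤ (n : ℝ) ^ ((2 : ℝ) * t) := by
        apply Real.rpow_le_rpow_of_exponent_le hn1
        nlinarith
      have e3 : (n : ℝ) ^ ((2 : ℝ) * t) = ((n : ℝ) ^ 2) ^ t := by
        rw [← Real.rpow_natCast ((n : ℝ) ^ 2) t, ← Real.rpow_natCast (n : ℝ) 2,
          ← Real.rpow_mul (le_of_lt hn0)]
        norm_num
      have h4N : (n : ℝ) ^ 2 ≤ 4 * (P2.card : ℝ) := by linarith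
      have e4 : ((n : ℝ) ^ 2) ^ t ≤ (4 * (P2.card : ℝ)) ^ t :=
        pow_le_pow_left₀ (by positivity) h4N t
      rw [mul_pow] at e4
      calc B ≤ (n : ℝ) ^ ((2 : ℝ) * t) := e1 ▸ e2
        _ = ((n : ℝ) ^ 2) ^ t := e3
        _ ≤ 4 ^ t * (P2.card : ℝ) ^ t := e4
    have h4 : 4 ^ t ≤ α ^ t * (n : ℝ) := by
      have : (4 / α) ^ t * α ^ t ≤ (n : ℝ) * α ^ t := by
        exact mul_le_mul_of_nonneg_right (le_of_lt hn4) (by positivity)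
      rw [div_pow, div_mul_cancel₀] at this
      · linarith
      · positivity
    have h2t : (2 : ℝ) ≤ 2 ^ t := by
      calc (2 : ℝ) = 2 ^ 1 := by norm_num
        _ ≤ 2 ^ t := pow_le_pow_right₀ (by norm_num) ht1
    have hx : (0 : ℝ) ≤ α ^ t * (n : ℝ) * (P2.card : ℝ) ^ t := by positivity
    have h5 : 4 ^ t * (P2.card : ℝ) ^ t ≤ α ^ t * (n : ℝ) * (P2.card : ℝ) ^ t :=
      mul_le_mul_of_nonneg_right h4 hNtpos.le
    have h6 : 2 * (α ^ t * (n : ℝ) * (P2.card : ℝ) ^ t)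
        ≤ 2 ^ t * (α ^ t * (n : ℝ) * (P2.card : ℝ) ^ t) :=
      mul_le_mul_of_nonneg_right h2t hx
    have h7 : (n : ℝ) * α ^ t * (2 ^ t * (P2.card : ℝ) ^ t)
        = 2 ^ t * (α ^ t * (n : ℝ) * (P2.card : ℝ) ^ t) := by ring
    linarith
  -- construct U
  set D := (Bad.filter fun S => S ⊆ X p).image
    fun S => if h : S.Nonempty then S.min' h else 0 with hD
  have hXsub : X p ⊆ Finset.range n := Finset.filter_subset _ _
  refine ⟨X p \ D, (Finset.sdiff_subset).trans hXsub, ?_, ?_⟩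
  · -- cardinality
    have hDle : D.card ≤ (Bad.filter fun S => S ⊆ X p).card := Finset.card_image_le
    have h3 : (X p).card ≤ (X p \ D).card + D.card := Finset.card_le_card_sdiff_add_card
    have hc1 : ((X p).card : ℝ) ≤ ((X p \ D).card : ℝ) + (D.card : ℝ) := by exact_mod_cast h3
    have hc2 : ((D.card : ℕ) : ℝ) ≤ ((Bad.filter fun S => S ⊆ X p).card : ℝ) := by
      exact_mod_cast hDle
    linarith [le_trans harr hp]
  · -- r-subsets have big joint links
    intro S hS
    rw [Finset.mem_powersetCard] at hS
    by_contra hcon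
    push_neg at hcon
    have hSU : S ⊆ X p \ D := hS.1
    have hSX : S ⊆ X p := hSU.trans Finset.sdiff_subset
    have hSBad : S ∈ Bad := by
      rw [hBaddef, Finset.mem_filter]
      exact ⟨Finset.mem_powersetCard.mpr ⟨hSX.trans hXsub, hS.2⟩, hcon⟩
    have hmemf : S ∈ Bad.filter fun T => T ⊆ X p := Finset.mem_filter.mpr ⟨hSBad, hSX⟩
    have hSne : S.Nonempty := Finset.card_pos.mp (hS.2 ▸ hr)
    have hmin : (if h : S.Nonempty then S.min' h else 0) ∈ D :=
      Finset.mem_image_of_mem _ hmemf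
    rw [dif_pos hSne] at hmin
    have hminS : S.min' hSne ∈ S := S.min'_mem hSne
    exact (Finset.mem_sdiff.mp (hSU hminS)).2 hmin
end
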